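/- arXiv:0810.4182 — 6 statements merged into one kernel-verified Lean document; each statement's English description precedes it below -/
import Mathlib

section
/- If C₁, C₂, C₃ are independent standard Cauchy random variables (density 1/(π(1+z²))), then the probability that sign(C₁+C₂) = sign(C₁+C₃) equals 2/3. -/
/-!
Conditionally on `C₀ = x`, the sums `x + C₁` and `x + C₂` are independent, and ties have
probability zero, so they have the same sign with probability `F(x)² + (1 - F(x))²`, where
`F = 1/2 + arctan/π` is the standard Cauchy CDF (using `F(-x) = 1 - F(x)`). Averaging over `C₀`
gives `∫ (F² + (1 - F)²) dF = ∫₀¹ (u² + (1 - u)²) du = 2/3`, i.e. the fundamental theorem of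
calculus for the antiderivative `(F³ - (1 - F)³)/3`.
-/

open MeasureTheory ProbabilityTheory Real Set Filter Topology

namespace Real

lemma sign_eq_one_iff {r : ℝ} : Real.sign r = 1 ↔ 0 < r := by
  rcases lt_trichotomy r 0 with h | h | h <;> norm_num [sign_of_neg, sign_of_pos, h, h.le]

lemma sign_eq_neg_one_iff {r : ℝ} : Real.sign r = -1 ↔ r < 0 := by
  rcases lt_trichotomy r 0 with h | h | h <;> norm_num [sign_of_neg, sign_of_pos, h, h.le]

@[fun_prop]
lemma measurable_sign : Measurable Real.sign :=
  Measurable.ite measurableSet_Iio measurable_const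
    (Measurable.ite measurableSet_Ioi measurable_const measurable_const)

end Real

theorem MeasureTheory.Measure.prod_setOf_eq_eq_sum {α β : Type*} [MeasurableSpace α]
    [MeasurableSpace β] [MeasurableSingletonClass β] (ν₁ ν₂ : Measure α) [SFinite ν₂]
    {f : α → β} (hf : Measurable f) (s : Finset β) (hs : ∀ a, f a ∈ s) :
    (ν₁.prod ν₂) {q | f q.1 = f q.2} = ∑ b ∈ s, ν₁ (f ⁻¹' {b}) * ν₂ (f ⁻¹' {b}) := by
  have hset : {q : α × α | f q.1 = f q.2} = ⋃ b ∈ s, (f ⁻¹' {b}) ×ˢ (f ⁻¹' {b}) := by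
    ext q
    simp [hs, eq_comm]
  rw [hset, measure_biUnion_finset]
  · simp_rw [Measure.prod_prod]
  · intro b _ c _ hbc
    exact Set.disjoint_left.2 fun q hb hc => hbc (hb.1.symm.trans hc.1)
  · exact fun b _ => (hf (measurableSet_singleton b)).prod (hf (measurableSet_singleton b))

theorem integral_sq_add_one_sub_sq_mul_of_hasDerivAt {F f : ℝ → ℝ}
    (hF : ∀ x, HasDerivAt F (f x) x) (hint : Integrable fun x => (F x ^ 2 + (1 - F x) ^ 2) * f x)
    (hbot : Tendsto F atBot (𝓝 0)) (htop : Tendsto F atTop (𝓝 1)) :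
    ∫ x, (F x ^ 2 + (1 - F x) ^ 2) * f x = 2 / 3 := by
  set G : ℝ → ℝ := fun u => (u ^ 3 - (1 - u) ^ 3) / 3
  have hG : ∀ u, HasDerivAt G (u ^ 2 + (1 - u) ^ 2) u := fun u => by
    have := (((hasDerivAt_id u).pow 3).sub (((hasDerivAt_id u).const_sub 1).pow 3)).div_const 3
    exact this.congr_deriv (by norm_num; ring)
  have hGc : Continuous G := by fun_prop
  rw [integral_of_hasDerivAt_of_tendsto (fun x => (hG (F x)).comp x (hF x)) hint
    ((hGc.tendsto 0).comp hbot) ((hGc.tendsto 1).comp htop)]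
  norm_num [G]

namespace ProbabilityTheory

open scoped NNReal

lemma iIndepFun.map_fin_three_eq_prod {Ω β : Type*} [MeasurableSpace Ω] [MeasurableSpace β]
    {μ : Measure Ω} [IsFiniteMeasure μ] {C : Fin 3 → Ω → β}
    (hmeas : ∀ i, Measurable (C i)) (hindep : iIndepFun C μ) :
    μ.map (fun ω => (C 0 ω, C 1 ω, C 2 ω)) =
      (μ.map (C 0)).prod ((μ.map (C 1)).prod (μ.map (C 2))) := by
  have h12 : IndepFun (C 1) (C 2) μ := hindep.indepFun (by decide)
  have h0 : IndepFun (C 0) (fun ω => (C 1 ω, C 2 ω)) μ :=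
    (hindep.indepFun_prodMk hmeas 1 2 0 (by decide) (by decide)).symm
  rw [(indepFun_iff_map_prod_eq_prod_map_map (hmeas 0).aemeasurable
      ((hmeas 1).prodMk (hmeas 2)).aemeasurable).1 h0,
    (indepFun_iff_map_prod_eq_prod_map_map (hmeas 1).aemeasurable (hmeas 2).aemeasurable).1 h12]

section cdf

variable (ν : Measure ℝ) [IsProbabilityMeasure ν]

lemma measure_Iio_eq_ofReal_cdf [NullSingletonClass ν] (t : ℝ) :
    ν (Iio t) = ENNReal.ofReal (cdf ν t) := by
  rw [ofReal_cdf, measure_congr Iio_ae_eq_Iic]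

lemma measure_Ioi_eq_ofReal_one_sub_cdf (t : ℝ) :
    ν (Ioi t) = ENNReal.ofReal (1 - cdf ν t) := by
  rw [← compl_Iic, prob_compl_eq_one_sub measurableSet_Iic, ← ofReal_cdf,
    ENNReal.ofReal_sub _ (cdf_nonneg ν t), ENNReal.ofReal_one]

lemma prod_setOf_sign_add_eq_sign_add [NullSingletonClass ν] (x : ℝ) :
    (ν.prod ν) {q | Real.sign (x + q.1) = Real.sign (x + q.2)} =
      ENNReal.ofReal (cdf ν (-x)) ^ 2 + ENNReal.ofReal (1 - cdf ν (-x)) ^ 2 := by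
  have hvals : ∀ y, Real.sign (x + y) ∈ ({-1, 0, 1} : Finset ℝ) := fun y => by
    simpa using Real.sign_apply_eq (x + y)
  have hneg : (fun y => Real.sign (x + y)) ⁻¹' {-1} = Iio (-x) := by
    ext y
    simp [Real.sign_eq_neg_one_iff, lt_neg_iff_add_neg']
  have hzero : (fun y => Real.sign (x + y)) ⁻¹' {0} = {-x} := by
    ext y
    simp [eq_neg_iff_add_eq_zero, add_comm]
  have hpos : (fun y => Real.sign (x + y)) ⁻¹' {1} = Ioi (-x) := by
    ext y
    simp [Real.sign_eq_one_iff, neg_lt_iff_pos_add']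
  rw [Measure.prod_setOf_eq_eq_sum ν ν (by fun_prop) _ hvals, Finset.sum_insert (by norm_num),
    Finset.sum_insert (by norm_num), Finset.sum_singleton, hneg, hzero, hpos,
    measure_Iio_eq_ofReal_cdf, measure_Ioi_eq_ofReal_one_sub_cdf, measure_singleton]
  ring

end cdf

instance (x₀ : ℝ) (γ : ℝ≥0) [NeZero γ] : NullSingletonClass (cauchyMeasure x₀ γ) := by
  rw [cauchyMeasure_of_scale_ne_zero x₀ (NeZero.ne γ)]
  infer_instance

lemma cauchyPDFReal_zero_one (x : ℝ) : cauchyPDFReal 0 1 x = π⁻¹ * (1 + x ^ 2)⁻¹ := by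
  simp [cauchyPDFReal_def, add_comm]

lemma cauchyMeasure_zero_one_eq_withDensity :
    cauchyMeasure 0 1 = volume.withDensity fun z => ENNReal.ofReal (1 / (π * (1 + z ^ 2))) := by
  rw [cauchyMeasure_of_scale_ne_zero 0 one_ne_zero]
  congr with z
  rw [cauchyPDF_def, cauchyPDFReal_zero_one, one_div, mul_inv]

lemma cdf_cauchyMeasure_zero_one (x : ℝ) :
    cdf (cauchyMeasure 0 1) x = 1 / 2 + arctan x / π := by
  have hpdf : ∀ y, 0 ≤ cauchyPDFReal 0 1 y := fun y => (cauchyPDF_pos 0 one_ne_zero y).le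
  rw [cdf_eq_real, cauchyMeasure_of_scale_ne_zero 0 one_ne_zero, measureReal_def,
    withDensity_apply _ measurableSet_Iic]
  simp only [cauchyPDF_def]
  rw [← ofReal_integral_eq_lintegral_ofReal (integrable_cauchyPDFReal 0).integrableOn
      (ae_of_all _ hpdf),
    ENNReal.toReal_ofReal (setIntegral_nonneg measurableSet_Iic fun y _ => hpdf y)]
  simp_rw [cauchyPDFReal_zero_one]
  rw [integral_const_mul, integral_Iic_inv_one_add_sq]
  field_simp
  ring

lemma cdf_cauchyMeasure_zero_one_neg (x : ℝ) :
    cdf (cauchyMeasure 0 1) (-x) = 1 - cdf (cauchyMeasure 0 1) x := by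
  simp only [cdf_cauchyMeasure_zero_one, arctan_neg]
  ring

lemma hasDerivAt_cdf_cauchyMeasure_zero_one (x : ℝ) :
    HasDerivAt (cdf (cauchyMeasure 0 1)) (cauchyPDFReal 0 1 x) x := by
  rw [funext cdf_cauchyMeasure_zero_one, cauchyPDFReal_zero_one]
  refine (((hasDerivAt_arctan x).div_const π).const_add (1 / 2)).congr_deriv ?_
  field_simp

lemma lintegral_cdf_sq_add_one_sub_cdf_sq_cauchyMeasure_zero_one :
    ∫⁻ x, (ENNReal.ofReal (cdf (cauchyMeasure 0 1) x) ^ 2 +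
      ENNReal.ofReal (1 - cdf (cauchyMeasure 0 1) x) ^ 2) ∂cauchyMeasure 0 1 = 2 / 3 := by
  set F := cdf (cauchyMeasure 0 1)
  have hF0 := cdf_nonneg (cauchyMeasure 0 1)
  have hF1 := cdf_le_one (cauchyMeasure 0 1)
  have hFm : Measurable F := (monotone_cdf _).measurable
  have hint : Integrable fun x => (F x ^ 2 + (1 - F x) ^ 2) * cauchyPDFReal 0 1 x :=
    (integrable_cauchyPDFReal 0).bdd_mul (c := 1) (by fun_prop) (ae_of_all _ fun x => by
      rw [Real.norm_of_nonneg (by positivity)]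
      nlinarith [hF0 x, hF1 x])
  calc _ = ∫⁻ x, ENNReal.ofReal ((F x ^ 2 + (1 - F x) ^ 2) * cauchyPDFReal 0 1 x) := by
        rw [cauchyMeasure_of_scale_ne_zero 0 one_ne_zero,
          lintegral_withDensity_eq_lintegral_mul _ (measurable_cauchyPDF 0 1) (by fun_prop)]
        refine lintegral_congr fun x => ?_
        rw [Pi.mul_apply, cauchyPDF_def, ENNReal.ofReal_mul (by positivity),
          ENNReal.ofReal_add (by positivity) (by nlinarith [hF1 x]), ENNReal.ofReal_pow (hF0 x),
          ENNReal.ofReal_pow (sub_nonneg.2 (hF1 x)), mul_comm]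
    _ = ENNReal.ofReal (2 / 3) := by
        rw [← ofReal_integral_eq_lintegral_ofReal hint (ae_of_all _ fun x => ?_),
          integral_sq_add_one_sub_sq_mul_of_hasDerivAt hasDerivAt_cdf_cauchyMeasure_zero_one hint
            (tendsto_cdf_atBot _) (tendsto_cdf_atTop _)]
        exact mul_nonneg (by positivity) (cauchyPDF_pos 0 one_ne_zero x).le
    _ = 2 / 3 := by
        rw [ENNReal.ofReal_div_of_pos (by norm_num)]
        norm_num

end ProbabilityTheory

/-- If `C₁, C₂, C₃` are independent standard Cauchy random variables
(density `1/(π(1+z²))`), then `P(sign(C₁+C₂) = sign(C₁+C₃)) = 2/3`. -/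
theorem cauchy_sign_agree (Ω : Type*) [MeasurableSpace Ω] (μ : Measure Ω)
    [IsProbabilityMeasure μ] (C : Fin 3 → Ω → ℝ)
    (hmeas : ∀ i, Measurable (C i))
    (hindep : iIndepFun C μ)
    (hlaw : ∀ i, Measure.map (C i) μ =
      MeasureTheory.volume.withDensity
        (fun z => ENNReal.ofReal (1 / (Real.pi * (1 + z^2))))) :
    μ {ω | Real.sign (C 0 ω + C 1 ω) = Real.sign (C 0 ω + C 2 ω)} = 2/3 := by
  have hν : ∀ i, μ.map (C i) = cauchyMeasure 0 1 := fun i => by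
    rw [hlaw i, cauchyMeasure_zero_one_eq_withDensity]
  set ν := cauchyMeasure 0 1
  set S : Set (ℝ × ℝ × ℝ) := {p | Real.sign (p.1 + p.2.1) = Real.sign (p.1 + p.2.2)}
  have hS : MeasurableSet S := measurableSet_eq_fun (by fun_prop) (by fun_prop)
  calc μ {ω | Real.sign (C 0 ω + C 1 ω) = Real.sign (C 0 ω + C 2 ω)}
      = μ.map (fun ω => (C 0 ω, C 1 ω, C 2 ω)) S :=
        (Measure.map_apply ((hmeas 0).prodMk ((hmeas 1).prodMk (hmeas 2))) hS).symm
    _ = ∫⁻ x, (ν.prod ν) {q | Real.sign (x + q.1) = Real.sign (x + q.2)} ∂ν := by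
        rw [hindep.map_fin_three_eq_prod hmeas, hν, hν, hν, Measure.prod_apply hS]
        rfl
    _ = ∫⁻ x, (ENNReal.ofReal (cdf ν x) ^ 2 + ENNReal.ofReal (1 - cdf ν x) ^ 2) ∂ν := by
        refine lintegral_congr fun x => ?_
        rw [prod_setOf_sign_add_eq_sign_add, cdf_cauchyMeasure_zero_one_neg, sub_sub_cancel,
          add_comm]
    _ = 2 / 3 := lintegral_cdf_sq_add_one_sub_cdf_sq_cauchyMeasure_zero_one
end

section
/- Let P be a b₀×b₁ probability matrix with positive entries and let λ₀, λ₁ satisfy λ₀, λ₁ ≤ 1 ≤ λ₀+λ₁. Say λ₀, λ₁ are P-sub-conjugate if for every b₀×b₁ probability matrix Q: K(Q‖P) ≥ λ₀·K(Q_{·*}‖P_{·*}) + λ₁·K(Q_{*·}‖P_{*·}). Then: if λ₀, λ₁ are P₁-sub-conjugate and P₂-sub-conjugate, they are (P₁⊗P₂)-sub-conjugate, where ⊗ is the tensor (Kronecker) product of probability matrices. -/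
/-!
Write `D(q‖p) = ∑ q log (q / p)` for nonnegative, not necessarily normalized, vectors. By the
chain rule, `D(Q‖P₁ ⊗ P₂)` is `D(R‖P₁)`, where `R` is the marginal of `Q` on the first factor,
plus the divergences of the blocks of `Q` from `R • P₂`. Sub-conjugacy applied to `R`, and (by
homogeneity of `D`) to every block, bounds this below by `λ₀` times a row term plus `λ₁` times a
column term. By the chain rule again and the joint convexity of `D` (the log-sum inequality), the
row term dominates `D(Q_{·*}‖(P₁ ⊗ P₂)_{·*})`, and likewise for columns; combining these needs
`λ₀, λ₁ ≥ 0`, which is what `λ₀, λ₁ ≤ 1 ≤ λ₀ + λ₁` provides.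
-/

open Finset

/-- `λ₀, λ₁` are `P`-sub-conjugate: for every probability matrix `Q` (same shape
as `P`), `K(Q‖P) ≥ λ₀ K(Q_{·*}‖P_{·*}) + λ₁ K(Q_{*·}‖P_{*·})`. -/
def SubConjugate {α β : Type*} [Fintype α] [Fintype β]
    (P : α → β → ℝ) (lam0 lam1 : ℝ) : Prop :=
  ∀ Q : α → β → ℝ, (∀ j k, 0 ≤ Q j k) → (∑ j, ∑ k, Q j k = 1) →
    lam0 * (∑ j, (∑ k, Q j k) * Real.log ((∑ k, Q j k) / (∑ k, P j k))) +
      lam1 * (∑ k, (∑ j, Q j k) * Real.log ((∑ j, Q j k) / (∑ j, P j k))) ≤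
    ∑ j, ∑ k, Q j k * Real.log (Q j k / P j k)

open Real

section RelativeEntropy

variable {ι κ : Type*} [Fintype ι] [Fintype κ]

noncomputable def relEntropy (q p : ι → ℝ) : ℝ := ∑ i, q i * log (q i / p i)

theorem sum_mul_log_sum_div_sum_le {a b : ι → ℝ} (ha : ∀ i, 0 ≤ a i) (hb : ∀ i, 0 ≤ b i)
    (hab : ∀ i, b i = 0 → a i = 0) :
    (∑ i, a i) * log ((∑ i, a i) / ∑ i, b i) ≤ ∑ i, a i * log (a i / b i) := by
  set B := ∑ i, b i
  rcases (sum_nonneg fun i _ => hb i).eq_or_lt with hB | hB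
  · have hb0 : ∀ i, b i = 0 := fun i =>
      (sum_eq_zero_iff_of_nonneg fun i _ => hb i).1 hB.symm i (mem_univ i)
    simp [fun i => hab i (hb0 i)]
  · -- Jensen for `x ↦ x log x` at the points `a i / b i` with weights `b i / B`
    have hw : ∀ i, b i / B * (a i / b i) = a i / B := fun i => by
      rcases (hb i).eq_or_lt with h | h
      · simp [← h, hab i h.symm]
      · field_simp
    have jensen := convexOn_mul_log.map_sum_le (t := univ) (w := fun i => b i / B)
      (p := fun i => a i / b i) (fun i _ => div_nonneg (hb i) hB.le)
      (by rw [← sum_div, div_self hB.ne']) (fun i _ => div_nonneg (ha i) (hb i))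
    simp only [smul_eq_mul, ← mul_assoc, hw] at jensen
    simp only [div_mul_eq_mul_div _ B, ← sum_div] at jensen
    have := mul_le_mul_of_nonneg_left jensen hB.le
    rwa [mul_div_cancel₀ _ hB.ne', mul_div_assoc', mul_div_cancel_left₀ _ hB.ne'] at this

theorem relEntropy_sum_le {τ : Type*} [Fintype τ] (q p : τ → ι → ℝ) (hq : ∀ t i, 0 ≤ q t i)
    (hp : ∀ t i, 0 ≤ p t i) (hqp : ∀ t i, p t i = 0 → q t i = 0) :
    relEntropy (fun i => ∑ t, q t i) (fun i => ∑ t, p t i) ≤ ∑ t, relEntropy (q t) (p t) := by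
  simp only [relEntropy]
  rw [sum_comm]
  exact sum_le_sum fun i _ =>
    sum_mul_log_sum_div_sum_le (fun t => hq t i) (fun t => hp t i) (fun t => hqp t i)

theorem relEntropy_comp_equiv (e : κ ≃ ι) (q p : ι → ℝ) :
    relEntropy (q ∘ e) (p ∘ e) = relEntropy q p :=
  e.sum_comp fun i => q i * log (q i / p i)

theorem mul_relEntropy_div (q p : ι → ℝ) {s : ℝ} (hs : s ≠ 0) :
    s * relEntropy (fun i => q i / s) p = relEntropy q (fun i => s * p i) := by
  rw [relEntropy, relEntropy, mul_sum]
  refine sum_congr rfl fun i _ => ?_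
  rw [div_div, ← mul_assoc, mul_div_cancel₀ _ hs]

theorem relEntropy_const_mul_eq_add (q b : κ → ℝ) {a : ℝ} (hq : ∀ k, 0 ≤ q k) (ha : a ≠ 0)
    (hb : ∀ k, b k ≠ 0) :
    relEntropy q (fun k => a * b k) =
      (∑ k, q k) * log ((∑ k, q k) / a) + relEntropy q (fun k => (∑ k', q k') * b k) := by
  have hterm : ∀ k, q k * log (q k / (a * b k)) =
      q k * log ((∑ k', q k') / a) + q k * log (q k / ((∑ k', q k') * b k)) := fun k => by
    rcases (hq k).eq_or_lt with h | h
    · simp [← h]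
    · have hs : ∑ k', q k' ≠ 0 :=
        (h.trans_le (single_le_sum (fun k' _ => hq k') (mem_univ k))).ne'
      rw [← mul_add, ← log_mul (div_ne_zero hs ha) (div_ne_zero h.ne' (mul_ne_zero hs (hb k)))]
      congr 2
      field_simp
  simp only [relEntropy, hterm, sum_add_distrib, ← sum_mul]

theorem relEntropy_prod_eq_add (q : ι → κ → ℝ) (a : ι → ℝ) (b : κ → ℝ) (hq : ∀ i k, 0 ≤ q i k)
    (ha : ∀ i, a i ≠ 0) (hb : ∀ k, b k ≠ 0) :
    relEntropy (fun x : ι × κ => q x.1 x.2) (fun x => a x.1 * b x.2) =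
      relEntropy (fun i => ∑ k, q i k) a +
        ∑ i, relEntropy (q i) (fun k => (∑ k', q i k') * b k) := by
  rw [relEntropy, Fintype.sum_prod_type, relEntropy, ← sum_add_distrib]
  exact sum_congr rfl fun i _ => relEntropy_const_mul_eq_add (q i) b (hq i) (ha i) hb

end RelativeEntropy

section SubConjugate

variable {α β : Type*} [Fintype α] [Fintype β] {P : α → β → ℝ} {lam0 lam1 : ℝ}

theorem subConjugate_iff_relEntropy :
    SubConjugate P lam0 lam1 ↔ ∀ Q : α → β → ℝ, (∀ j k, 0 ≤ Q j k) → ∑ j, ∑ k, Q j k = 1 →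
      lam0 * relEntropy (fun j => ∑ k, Q j k) (fun j => ∑ k, P j k) +
          lam1 * relEntropy (fun k => ∑ j, Q j k) (fun k => ∑ j, P j k) ≤
        relEntropy (fun x : α × β => Q x.1 x.2) (fun x => P x.1 x.2) := by
  simp only [SubConjugate, relEntropy, Fintype.sum_prod_type]

theorem SubConjugate.le_of_nonneg (h : SubConjugate P lam0 lam1) {Q : α → β → ℝ}
    (hQ : ∀ j k, 0 ≤ Q j k) :
    lam0 * relEntropy (fun j => ∑ k, Q j k) (fun j => (∑ j', ∑ k, Q j' k) * ∑ k, P j k) +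
        lam1 * relEntropy (fun k => ∑ j, Q j k) (fun k => (∑ j', ∑ k', Q j' k') * ∑ j, P j k) ≤
      relEntropy (fun x : α × β => Q x.1 x.2) (fun x => (∑ j, ∑ k, Q j k) * P x.1 x.2) := by
  set s := ∑ j, ∑ k, Q j k
  rcases (sum_nonneg fun j _ => sum_nonneg fun k _ => hQ j k).eq_or_lt with hs | hs
  · have hQ0 : ∀ j k, Q j k = 0 := fun j k =>
      (sum_eq_zero_iff_of_nonneg fun k _ => hQ j k).1
        ((sum_eq_zero_iff_of_nonneg fun j _ => sum_nonneg fun k _ => hQ j k).1 hs.symm j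
          (mem_univ j)) k (mem_univ k)
    simp [relEntropy, hQ0]
  · have hnorm := subConjugate_iff_relEntropy.1 h (fun j k => Q j k / s)
      (fun j k => div_nonneg (hQ j k) hs.le) (by simp only [← sum_div]; exact div_self hs.ne')
    simp only [← sum_div] at hnorm
    have := mul_le_mul_of_nonneg_left hnorm hs.le
    rwa [mul_add, mul_left_comm, mul_left_comm s lam1, mul_relEntropy_div _ _ hs.ne',
      mul_relEntropy_div _ _ hs.ne',
      mul_relEntropy_div (fun x : α × β => Q x.1 x.2) _ hs.ne'] at this

end SubConjugate

section Tensor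

variable {α₁ β₁ α₂ β₂ : Type*} [Fintype α₂] [Fintype β₂]

def fstMarginal (Q : α₁ × α₂ → β₁ × β₂ → ℝ) (j₁ : α₁) (k₁ : β₁) : ℝ :=
  ∑ j₂, ∑ k₂, Q (j₁, j₂) (k₁, k₂)

theorem fstMarginal_transpose (Q : α₁ × α₂ → β₁ × β₂ → ℝ) (j₁ : α₁) (k₁ : β₁) :
    fstMarginal (fun k j => Q j k) k₁ j₁ = fstMarginal Q j₁ k₁ :=
  sum_comm

theorem sum_le_fstMarginal (Q : α₁ × α₂ → β₁ × β₂ → ℝ) (hQ : ∀ j k, 0 ≤ Q j k) (j₁ : α₁)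
    (k₁ : β₁) (j₂ : α₂) : ∑ k₂, Q (j₁, j₂) (k₁, k₂) ≤ fstMarginal Q j₁ k₁ :=
  single_le_sum (f := fun j₂ => ∑ k₂, Q (j₁, j₂) (k₁, k₂))
    (fun _ _ => sum_nonneg fun _ _ => hQ _ _) (mem_univ j₂)

variable [Fintype α₁] [Fintype β₁] {P₁ : α₁ → β₁ → ℝ} {P₂ : α₂ → β₂ → ℝ}

theorem relEntropy_tensor_eq_add (Q : α₁ × α₂ → β₁ × β₂ → ℝ) (hQ : ∀ j k, 0 ≤ Q j k)
    (hP₁ : ∀ j k, P₁ j k ≠ 0) (hP₂ : ∀ j k, P₂ j k ≠ 0) :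
    relEntropy (fun x : (α₁ × α₂) × (β₁ × β₂) => Q x.1 x.2)
        (fun x => P₁ x.1.1 x.2.1 * P₂ x.1.2 x.2.2) =
      relEntropy (fun x : α₁ × β₁ => fstMarginal Q x.1 x.2) (fun x => P₁ x.1 x.2) +
        ∑ j₁, ∑ k₁, relEntropy (fun y : α₂ × β₂ => Q (j₁, y.1) (k₁, y.2))
          (fun y => fstMarginal Q j₁ k₁ * P₂ y.1 y.2) := by
  rw [← relEntropy_comp_equiv (Equiv.prodProdProdComm α₁ β₁ α₂ β₂)]
  refine (relEntropy_prod_eq_add (fun (x : α₁ × β₁) (y : α₂ × β₂) => Q (x.1, y.1) (x.2, y.2))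
    (fun x => P₁ x.1 x.2) (fun y => P₂ y.1 y.2) (fun _ _ => hQ _ _) (fun _ => hP₁ _ _)
    (fun _ => hP₂ _ _)).trans ?_
  simp only [fstMarginal, Fintype.sum_prod_type]

theorem relEntropy_rowSum_tensor_le [Nonempty β₁] [Nonempty β₂] (Q : α₁ × α₂ → β₁ × β₂ → ℝ)
    (hQ : ∀ j k, 0 ≤ Q j k) (hP₁ : ∀ j k, 0 < P₁ j k) (hP₂ : ∀ j k, 0 < P₂ j k) :
    relEntropy (fun j => ∑ k, Q j k) (fun j : α₁ × α₂ => ∑ k : β₁ × β₂, P₁ j.1 k.1 * P₂ j.2 k.2) ≤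
      relEntropy (fun j₁ => ∑ k₁, fstMarginal Q j₁ k₁) (fun j₁ => ∑ k₁, P₁ j₁ k₁) +
        ∑ j₁, ∑ k₁, relEntropy (fun j₂ => ∑ k₂, Q (j₁, j₂) (k₁, k₂))
          (fun j₂ => fstMarginal Q j₁ k₁ * ∑ k₂, P₂ j₂ k₂) := by
  have hrow₁ : ∀ j₁, 0 < ∑ k₁, P₁ j₁ k₁ := fun j₁ => sum_pos (fun k _ => hP₁ j₁ k) univ_nonempty
  have hrow₂ : ∀ j₂, 0 < ∑ k₂, P₂ j₂ k₂ := fun j₂ => sum_pos (fun k _ => hP₂ j₂ k) univ_nonempty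
  have hProw : (fun j : α₁ × α₂ => ∑ k : β₁ × β₂, P₁ j.1 k.1 * P₂ j.2 k.2) =
      fun j => (∑ k₁, P₁ j.1 k₁) * ∑ k₂, P₂ j.2 k₂ := by
    ext j
    rw [Fintype.sum_prod_type, sum_mul_sum]
  have hQrow : ∀ j₁ j₂, ∑ k, Q (j₁, j₂) k = ∑ k₁, ∑ k₂, Q (j₁, j₂) (k₁, k₂) := fun _ _ =>
    Fintype.sum_prod_type _
  have hmarg : ∀ j₁, ∑ j₂, ∑ k, Q (j₁, j₂) k = ∑ k₁, fstMarginal Q j₁ k₁ := fun j₁ => by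
    simp only [hQrow, fstMarginal]
    exact sum_comm
  rw [hProw]
  refine (relEntropy_prod_eq_add (fun j₁ j₂ => ∑ k, Q (j₁, j₂) k) _ _
    (fun _ _ => sum_nonneg fun _ _ => hQ _ _) (fun j₁ => (hrow₁ j₁).ne')
    (fun j₂ => (hrow₂ j₂).ne')).trans_le ?_
  simp only [hmarg]
  gcongr with j₁
  simp only [hQrow, sum_mul]
  refine relEntropy_sum_le _ _ (fun _ _ => sum_nonneg fun _ _ => hQ _ _)
    (fun _ j₂ => mul_nonneg (sum_nonneg fun _ _ => sum_nonneg fun _ _ => hQ _ _)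
      (hrow₂ j₂).le) (fun k₁ j₂ h => ?_)
  have hR : fstMarginal Q j₁ k₁ = 0 := (mul_eq_zero.1 h).resolve_right (hrow₂ j₂).ne'
  exact le_antisymm (hR ▸ sum_le_fstMarginal Q hQ j₁ k₁ j₂) (sum_nonneg fun _ _ => hQ _ _)

theorem relEntropy_colSum_tensor_le [Nonempty α₁] [Nonempty α₂] (Q : α₁ × α₂ → β₁ × β₂ → ℝ)
    (hQ : ∀ j k, 0 ≤ Q j k) (hP₁ : ∀ j k, 0 < P₁ j k) (hP₂ : ∀ j k, 0 < P₂ j k) :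
    relEntropy (fun k => ∑ j, Q j k) (fun k : β₁ × β₂ => ∑ j : α₁ × α₂, P₁ j.1 k.1 * P₂ j.2 k.2) ≤
      relEntropy (fun k₁ => ∑ j₁, fstMarginal Q j₁ k₁) (fun k₁ => ∑ j₁, P₁ j₁ k₁) +
        ∑ j₁, ∑ k₁, relEntropy (fun k₂ => ∑ j₂, Q (j₁, j₂) (k₁, k₂))
          (fun k₂ => fstMarginal Q j₁ k₁ * ∑ j₂, P₂ j₂ k₂) := by
  have h := relEntropy_rowSum_tensor_le (P₁ := fun k j => P₁ j k) (P₂ := fun k j => P₂ j k)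
    (fun k j => Q j k) (fun _ _ => hQ _ _) (fun _ _ => hP₁ _ _) (fun _ _ => hP₂ _ _)
  simp only [fstMarginal_transpose] at h
  rwa [sum_comm (s := univ (α := β₁))] at h

end Tensor

theorem SubConjugate.tensor {α₁ β₁ α₂ β₂ : Type*} [Fintype α₁] [Fintype β₁] [Fintype α₂]
    [Fintype β₂] {P₁ : α₁ → β₁ → ℝ} {P₂ : α₂ → β₂ → ℝ} {lam0 lam1 : ℝ}
    (hP₁ : ∀ j k, 0 < P₁ j k) (hP₂ : ∀ j k, 0 < P₂ j k) (hl0 : 0 ≤ lam0) (hl1 : 0 ≤ lam1)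
    (h₁ : SubConjugate P₁ lam0 lam1) (h₂ : SubConjugate P₂ lam0 lam1) :
    SubConjugate (fun (j : α₁ × α₂) (k : β₁ × β₂) => P₁ j.1 k.1 * P₂ j.2 k.2) lam0 lam1 := by
  rw [subConjugate_iff_relEntropy]
  intro Q hQ hQsum
  obtain ⟨j, -, hj⟩ := exists_ne_zero_of_sum_ne_zero (hQsum.trans_ne one_ne_zero)
  obtain ⟨k, -, -⟩ := exists_ne_zero_of_sum_ne_zero hj
  have : Nonempty α₁ := ⟨j.1⟩
  have : Nonempty α₂ := ⟨j.2⟩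
  have : Nonempty β₁ := ⟨k.1⟩
  have : Nonempty β₂ := ⟨k.2⟩
  have hR : ∑ j₁, ∑ k₁, fstMarginal Q j₁ k₁ = 1 := by
    rw [← hQsum]
    simp only [fstMarginal, Fintype.sum_prod_type]
    exact sum_congr rfl fun _ _ => sum_comm
  have marginal := subConjugate_iff_relEntropy.1 h₁ (fstMarginal Q)
    (fun _ _ => sum_nonneg fun _ _ => sum_nonneg fun _ _ => hQ _ _) hR
  have blocks := sum_le_sum fun j₁ (_ : j₁ ∈ univ) => sum_le_sum fun k₁ (_ : k₁ ∈ univ) =>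
    h₂.le_of_nonneg (Q := fun j₂ k₂ => Q (j₁, j₂) (k₁, k₂)) fun _ _ => hQ _ _
  simp only [sum_add_distrib, ← mul_sum, ← fstMarginal.eq_1] at blocks
  have rows := mul_le_mul_of_nonneg_left (relEntropy_rowSum_tensor_le Q hQ hP₁ hP₂) hl0
  have cols := mul_le_mul_of_nonneg_left (relEntropy_colSum_tensor_le Q hQ hP₁ hP₂) hl1
  rw [relEntropy_tensor_eq_add Q hQ (fun j k => (hP₁ j k).ne') fun j k => (hP₂ j k).ne']
  linarith

theorem subConjugate_tensor_general (b₀ b₁ c₀ c₁ : ℕ)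
    (P₁ : Fin b₀ → Fin b₁ → ℝ) (P₂ : Fin c₀ → Fin c₁ → ℝ)
    (hP₁pos : ∀ j k, 0 < P₁ j k)
    (hP₂pos : ∀ j k, 0 < P₂ j k)
    (lam0 lam1 : ℝ) (hl0 : lam0 ≤ 1) (hl1 : lam1 ≤ 1) (hls : 1 ≤ lam0 + lam1)
    (h₁ : SubConjugate P₁ lam0 lam1) (h₂ : SubConjugate P₂ lam0 lam1) :
    SubConjugate (fun (j : Fin b₀ × Fin c₀) (k : Fin b₁ × Fin c₁) =>
      P₁ j.1 k.1 * P₂ j.2 k.2) lam0 lam1 :=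
  h₁.tensor hP₁pos hP₂pos (by linarith) (by linarith) h₂

/-- If `λ₀, λ₁ ≤ 1 ≤ λ₀+λ₁` are sub-conjugate for `P₁` and for `P₂`, then they
are sub-conjugate for the tensor product `P₁ ⊗ P₂`. -/
theorem subConjugate_tensor (b₀ b₁ c₀ c₁ : ℕ)
    (P₁ : Fin b₀ → Fin b₁ → ℝ) (P₂ : Fin c₀ → Fin c₁ → ℝ)
    (hP₁pos : ∀ j k, 0 < P₁ j k) (hP₁sum : ∑ j, ∑ k, P₁ j k = 1)
    (hP₂pos : ∀ j k, 0 < P₂ j k) (hP₂sum : ∑ j, ∑ k, P₂ j k = 1)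
    (lam0 lam1 : ℝ) (hl0 : lam0 ≤ 1) (hl1 : lam1 ≤ 1) (hls : 1 ≤ lam0 + lam1)
    (h₁ : SubConjugate P₁ lam0 lam1) (h₂ : SubConjugate P₂ lam0 lam1) :
    SubConjugate (fun (j : Fin b₀ × Fin c₀) (k : Fin b₁ × Fin c₁) =>
      P₁ j.1 k.1 * P₂ j.2 k.2) lam0 lam1 :=
  subConjugate_tensor_general b₀ b₁ c₀ c₁ P₁ P₂ hP₁pos hP₂pos lam0 lam1 hl0 hl1 hls h₁ h₂
end

section
/- Let P be a b₀×b₁ probability matrix with positive entries, and let λ₀, λ₁ ≤ 1 ≤ λ₀+λ₁ be P-sub-conjugate (i.e., for every probability matrix Q, K(Q‖P) ≥ λ₀·K(Q_{·*}‖P_{·*}) + λ₁·K(Q_{*·}‖P_{*·})). Then for any subsets B₀ ⊆ {0,...,b₀-1} and B₁ ⊆ {0,...,b₁-1}: p_{B₀B₁} ≤ (p_{B₀*})^{λ₀}·(p_{*B₁})^{λ₁}, where p_{B₀B₁} = ∑_{j∈B₀, k∈B₁} p_{jk}, p_{B₀*} = ∑_{j∈B₀} p_{j*}, p_{*B₁}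 = ∑_{k∈B₁} p_{*k}. -/
/-!
Restrict `P` to the rectangle `B₀ × B₁` and renormalize, obtaining `Q`. Since `Q` is a constant
multiple `1 / p_{B₀B₁}` of `P` on its support, `K(Q‖P) = -log p_{B₀B₁}`, while by Gibbs'
inequality (Jensen for `log`) the marginal divergences satisfy `K(Q_{·*}‖P_{·*}) ≥ -log p_{B₀*}`
and `K(Q_{*·}‖P_{*·}) ≥ -log p_{*B₁}`. As `λ₀, λ₁ ≥ 0`, sub-conjugacy at `Q` gives
`log p_{B₀B₁} ≤ λ₀ log p_{B₀*} + λ₁ log p_{*B₁}`; exponentiate.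
-/

open Finset

open Real

theorem neg_log_sum_le_sum_mul_log_div {ι : Type*} {s : Finset ι} {q p : ι → ℝ}
    (hq : ∀ i ∈ s, 0 < q i) (hp : ∀ i ∈ s, 0 < p i) (hq1 : ∑ i ∈ s, q i = 1) :
    -log (∑ i ∈ s, p i) ≤ ∑ i ∈ s, q i * log (q i / p i) := by
  have jensen := strictConcaveOn_log_Ioi.concaveOn.le_map_sum (t := s) (p := fun i ↦ p i / q i)
    (fun i hi ↦ (hq i hi).le) hq1 (fun i hi ↦ div_pos (hp i hi) (hq i hi))
  simp only [smul_eq_mul] at jensen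
  rw [sum_congr rfl fun i hi ↦ mul_div_cancel₀ (p i) (hq i hi).ne'] at jensen
  calc -log (∑ i ∈ s, p i) ≤ -∑ i ∈ s, q i * log (p i / q i) := neg_le_neg jensen
    _ = ∑ i ∈ s, q i * log (q i / p i) := by
      rw [← sum_neg_distrib]
      exact sum_congr rfl fun i _ ↦ by rw [← inv_div, log_inv, mul_neg, neg_neg]

theorem le_rpow_mul_rpow_of_log_le {x a b s t : ℝ} (hx : 0 < x) (ha : 0 < a) (hb : 0 < b)
    (h : log x ≤ s * log a + t * log b) : x ≤ a ^ s * b ^ t := by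
  rwa [← log_le_log_iff hx (by positivity), log_mul (by positivity) (by positivity),
    log_rpow ha, log_rpow hb]

section condRect

variable {α β : Type*} [DecidableEq α] [DecidableEq β]

noncomputable def condRect (P : α → β → ℝ) (B₀ : Finset α) (B₁ : Finset β) (j : α) (k : β) : ℝ :=
  if j ∈ B₀ ∧ k ∈ B₁ then P j k / ∑ j ∈ B₀, ∑ k ∈ B₁, P j k else 0

variable {P : α → β → ℝ} {B₀ : Finset α} {B₁ : Finset β}

theorem condRect_nonneg (hP : ∀ j k, 0 ≤ P j k) (j : α) (k : β) : 0 ≤ condRect P B₀ B₁ j k := by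
  unfold condRect
  split_ifs
  · exact div_nonneg (hP j k) (sum_nonneg fun j _ ↦ sum_nonneg fun k _ ↦ hP j k)
  · exact le_rfl

theorem condRect_swap (j : α) (k : β) :
    condRect (fun k j ↦ P j k) B₁ B₀ k j = condRect P B₀ B₁ j k := by
  simp only [condRect, and_comm, sum_comm (s := B₁)]

theorem sum_condRect [Fintype β] (j : α) :
    ∑ k, condRect P B₀ B₁ j k = if j ∈ B₀ then (∑ k ∈ B₁, P j k) / ∑ j ∈ B₀, ∑ k ∈ B₁, P j k
      else 0 := by
  by_cases hj : j ∈ B₀ <;> simp [condRect, hj, sum_ite_mem, sum_div]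

theorem sum_sum_condRect [Fintype α] [Fintype β] (hS : ∑ j ∈ B₀, ∑ k ∈ B₁, P j k ≠ 0) :
    ∑ j, ∑ k, condRect P B₀ B₁ j k = 1 := by
  simp only [sum_condRect, sum_ite_mem, univ_inter, ← sum_div, div_self hS]

theorem sum_sum_condRect_mul_log_div [Fintype α] [Fintype β] (hP : ∀ j k, P j k ≠ 0)
    (hS : ∑ j ∈ B₀, ∑ k ∈ B₁, P j k ≠ 0) :
    ∑ j, ∑ k, condRect P B₀ B₁ j k * log (condRect P B₀ B₁ j k / P j k) =
      -log (∑ j ∈ B₀, ∑ k ∈ B₁, P j k) := by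
  have hconst : ∀ j k, condRect P B₀ B₁ j k * log (condRect P B₀ B₁ j k / P j k) =
      condRect P B₀ B₁ j k * -log (∑ j ∈ B₀, ∑ k ∈ B₁, P j k) := by
    intro j k
    by_cases h : j ∈ B₀ ∧ k ∈ B₁
    · rw [condRect, if_pos h, div_right_comm, div_self (hP j k), one_div, log_inv]
    · simp [condRect, h]
  simp only [hconst, ← sum_mul, sum_sum_condRect hS, one_mul]

theorem neg_log_le_rowKL_condRect [Fintype α] [Fintype β] (hP : ∀ j k, 0 < P j k)
    (hS : 0 < ∑ j ∈ B₀, ∑ k ∈ B₁, P j k) :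
    -log (∑ j ∈ B₀, ∑ k, P j k) ≤ ∑ j, (∑ k, condRect P B₀ B₁ j k) *
      log ((∑ k, condRect P B₀ B₁ j k) / ∑ k, P j k) := by
  have hB₁ : B₁.Nonempty := by
    rw [nonempty_iff_ne_empty]
    rintro rfl
    simp at hS
  rw [← sum_subset (subset_univ B₀) fun j _ hj ↦ by rw [sum_condRect, if_neg hj, zero_mul]]
  refine (neg_log_sum_le_sum_mul_log_div (fun j _ ↦ div_pos (sum_pos (fun k _ ↦ hP j k) hB₁) hS)
    (fun j _ ↦ sum_pos (fun k _ ↦ hP j k) (hB₁.mono (subset_univ B₁))) ?_).trans_eq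
    (sum_congr rfl fun j hj ↦ by rw [sum_condRect, if_pos hj])
  rw [← sum_div, div_self hS.ne']

theorem neg_log_le_colKL_condRect [Fintype α] [Fintype β] (hP : ∀ j k, 0 < P j k)
    (hS : 0 < ∑ j ∈ B₀, ∑ k ∈ B₁, P j k) :
    -log (∑ k ∈ B₁, ∑ j, P j k) ≤ ∑ k, (∑ j, condRect P B₀ B₁ j k) *
      log ((∑ j, condRect P B₀ B₁ j k) / ∑ j, P j k) := by
  have := neg_log_le_rowKL_condRect (P := fun k j ↦ P j k) (fun k j ↦ hP j k)
    (by rwa [sum_comm])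
  simpa only [condRect_swap] using this

end condRect

theorem bucket_prob_bound_general (b₀ b₁ : ℕ) (P : Fin b₀ → Fin b₁ → ℝ)
    (hPpos : ∀ j k, 0 < P j k)
    (lam0 lam1 : ℝ) (hl0 : lam0 ≤ 1) (hl1 : lam1 ≤ 1) (hls : 1 ≤ lam0 + lam1)
    (hsub : SubConjugate P lam0 lam1)
    (B₀ : Finset (Fin b₀)) (B₁ : Finset (Fin b₁)) :
    ∑ j ∈ B₀, ∑ k ∈ B₁, P j k ≤
      (∑ j ∈ B₀, ∑ k, P j k) ^ lam0 * (∑ k ∈ B₁, ∑ j, P j k) ^ lam1 := by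
  have hP : ∀ j k, 0 ≤ P j k := fun j k ↦ (hPpos j k).le
  have hA : ∑ j ∈ B₀, ∑ k ∈ B₁, P j k ≤ ∑ j ∈ B₀, ∑ k, P j k :=
    sum_le_sum fun j _ ↦ sum_le_sum_of_subset_of_nonneg (subset_univ B₁) fun k _ _ ↦ hP j k
  have hB : ∑ j ∈ B₀, ∑ k ∈ B₁, P j k ≤ ∑ k ∈ B₁, ∑ j, P j k := by
    rw [sum_comm]
    exact sum_le_sum fun k _ ↦ sum_le_sum_of_subset_of_nonneg (subset_univ B₀) fun j _ _ ↦ hP j k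
  rcases (sum_nonneg fun j _ ↦ sum_nonneg fun k _ ↦ hP j k :
    0 ≤ ∑ j ∈ B₀, ∑ k ∈ B₁, P j k).eq_or_lt with hS | hS
  · rw [← hS]
    exact mul_nonneg (rpow_nonneg (hS ▸ hA) _) (rpow_nonneg (hS ▸ hB) _)
  have hsubQ := hsub (condRect P B₀ B₁) (condRect_nonneg hP) (sum_sum_condRect hS.ne')
  rw [sum_sum_condRect_mul_log_div (fun j k ↦ (hPpos j k).ne') hS.ne'] at hsubQ
  have hrow := mul_le_mul_of_nonneg_left (neg_log_le_rowKL_condRect hPpos hS)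
    (by linarith : 0 ≤ lam0)
  have hcol := mul_le_mul_of_nonneg_left (neg_log_le_colKL_condRect hPpos hS)
    (by linarith : 0 ≤ lam1)
  exact le_rpow_mul_rpow_of_log_le hS (hS.trans_le hA) (hS.trans_le hB) (by linarith)

/-- If `λ₀, λ₁ ≤ 1 ≤ λ₀+λ₁` are `P`-sub-conjugate, then for any bucket pair
`B₀, B₁`: `p_{B₀B₁} ≤ (p_{B₀*})^{λ₀} (p_{*B₁})^{λ₁}`. -/
theorem bucket_prob_bound (b₀ b₁ : ℕ) (P : Fin b₀ → Fin b₁ → ℝ)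
    (hPpos : ∀ j k, 0 < P j k) (hPsum : ∑ j, ∑ k, P j k = 1)
    (lam0 lam1 : ℝ) (hl0 : lam0 ≤ 1) (hl1 : lam1 ≤ 1) (hls : 1 ≤ lam0 + lam1)
    (hsub : SubConjugate P lam0 lam1)
    (B₀ : Finset (Fin b₀)) (B₁ : Finset (Fin b₁)) :
    ∑ j ∈ B₀, ∑ k ∈ B₁, P j k ≤
      (∑ j ∈ B₀, ∑ k, P j k) ^ lam0 * (∑ k ∈ B₁, ∑ j, P j k) ^ lam1 :=
  bucket_prob_bound_general b₀ b₁ P hPpos lam0 lam1 hl0 hl1 hls hsub B₀ B₁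
end

section
/- Let P be a b₀×b₁ probability matrix with positive entries and 0 ≤ μ ≤ 1. Define I(P, λ₀, λ₁, μ) = sup_Q [λ₀·K(Q_{·*}‖P_{·*}) + λ₁·K(Q_{*·}‖P_{*·}) − μ·K(Q‖P)] over probability matrices Q. Then I(P, 1, 1, μ) = max_{j,k} ln((p_{jk})^μ/(p_{j*}·p_{*k})). -/
open Finset

lemma bucket_aux_term (p pr pc q r c mu M : ℝ) (hp : 0 < p) (hpr : 0 < pr) (hpc : 0 < pc)
    (hq : 0 ≤ q) (hq1 : q ≤ 1) (hr : q ≤ r) (hc : q ≤ c)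
    (hmu1 : mu ≤ 1)
    (hM : mu * Real.log p - Real.log pr - Real.log pc ≤ M) :
    q * Real.log (r / pr) + q * Real.log (c / pc) - mu * (q * Real.log (q / p)) ≤
      q * M + r * c - q := by
  rcases eq_or_lt_of_le hq with h0 | hqpos
  · have hr0 : 0 ≤ r := le_trans hq hr
    have hc0 : 0 ≤ c := le_trans hq hc
    rw [← h0]
    nlinarith [mul_nonneg hr0 hc0]
  · have hrpos : 0 < r := lt_of_lt_of_le hqpos hr
    have hcpos : 0 < c := lt_of_lt_of_le hqpos hc
    have e1 : Real.log (r / pr) = Real.log r - Real.log pr :=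
      Real.log_div (ne_of_gt hrpos) (ne_of_gt hpr)
    have e2 : Real.log (c / pc) = Real.log c - Real.log pc :=
      Real.log_div (ne_of_gt hcpos) (ne_of_gt hpc)
    have e3 : Real.log (q / p) = Real.log q - Real.log p :=
      Real.log_div (ne_of_gt hqpos) (ne_of_gt hp)
    have e4 : Real.log (r * c / q) = Real.log r + Real.log c - Real.log q := by
      rw [Real.log_div (by positivity) (ne_of_gt hqpos),
        Real.log_mul (ne_of_gt hrpos) (ne_of_gt hcpos)]
    have h1 : q * Real.log (r * c / q) ≤ r * c - q := by
      have hle := Real.log_le_sub_one_of_pos (show (0:ℝ) < r * c / q by positivity)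
      have := mul_le_mul_of_nonneg_left hle hq
      calc q * Real.log (r * c / q) ≤ q * (r * c / q - 1) := this
        _ = r * c - q := by field_simp
    have h2 : (1 - mu) * (q * Real.log q) ≤ 0 :=
      mul_nonpos_of_nonneg_of_nonpos (by linarith)
        (mul_nonpos_of_nonneg_of_nonpos hq (Real.log_nonpos hq hq1))
    have h3 : q * (mu * Real.log p - Real.log pr - Real.log pc) ≤ q * M :=
      mul_le_mul_of_nonneg_left hM hq
    rw [e1, e2, e3]
    rw [e4] at h1
    nlinarith [h1, h2, h3]

/-- The set of values `λ₀ K(Q_{·*}‖P_{·*}) + λ₁ K(Q_{*·}‖P_{*·}) − μ K(Q‖P)`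
as `Q` ranges over probability matrices; the bucketing information
`I(P, λ₀, λ₁, μ)` is its supremum. -/
def bucketInfoSet {α β : Type*} [Fintype α] [Fintype β]
    (P : α → β → ℝ) (lam0 lam1 mu : ℝ) : Set ℝ :=
  { x | ∃ Q : α → β → ℝ, (∀ j k, 0 ≤ Q j k) ∧ (∑ j, ∑ k, Q j k = 1) ∧
    x = lam0 * (∑ j, (∑ k, Q j k) * Real.log ((∑ k, Q j k) / (∑ k, P j k))) +
        lam1 * (∑ k, (∑ j, Q j k) * Real.log ((∑ j, Q j k) / (∑ j, P j k))) -
        mu * (∑ j, ∑ k, Q j k * Real.log (Q j k / P j k)) }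

/-- For `0 ≤ μ ≤ 1`,
`I(P, 1, 1, μ) = max_{j,k} ln (p_{jk}^μ / (p_{j*} p_{*k}))`. -/
theorem bucketInfo_one_one_small_mu (b₀ b₁ : ℕ) (P : Fin b₀ → Fin b₁ → ℝ)
    (hPpos : ∀ j k, 0 < P j k) (hPsum : ∑ j, ∑ k, P j k = 1)
    (mu : ℝ) (hmu0 : 0 ≤ mu) (hmu1 : mu ≤ 1) :
    sSup (bucketInfoSet P 1 1 mu) =
      ⨆ j, ⨆ k, Real.log ((P j k ^ mu) / ((∑ k', P j k') * (∑ j', P j' k))) := by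
  classical
  have hb0 : Nonempty (Fin b₀) := by
    rcases Nat.eq_zero_or_pos b₀ with h | h
    · subst h; simp at hPsum
    · exact ⟨⟨0, h⟩⟩
  have hb1 : Nonempty (Fin b₁) := by
    rcases Nat.eq_zero_or_pos b₁ with h | h
    · subst h; simp at hPsum
    · exact ⟨⟨0, h⟩⟩
  have hprpos : ∀ j, 0 < ∑ k', P j k' :=
    fun j => Finset.sum_pos (fun k _ => hPpos j k) Finset.univ_nonempty
  have hpcpos : ∀ k, 0 < ∑ j', P j' k :=
    fun k => Finset.sum_pos (fun j _ => hPpos j k) Finset.univ_nonempty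
  set M := ⨆ j, ⨆ k, Real.log ((P j k ^ mu) / ((∑ k', P j k') * (∑ j', P j' k))) with hMdef
  have hval : ∀ j k, Real.log (P j k ^ mu / ((∑ k', P j k') * (∑ j', P j' k))) =
      mu * Real.log (P j k) - Real.log (∑ k', P j k') - Real.log (∑ j', P j' k) := by
    intro j k
    rw [Real.log_div (ne_of_gt (Real.rpow_pos_of_pos (hPpos j k) mu))
      (ne_of_gt (mul_pos (hprpos j) (hpcpos k))),
      Real.log_mul (ne_of_gt (hprpos j)) (ne_of_gt (hpcpos k)), Real.log_rpow (hPpos j k)]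
    ring
  have hMle : ∀ j k,
      mu * Real.log (P j k) - Real.log (∑ k', P j k') - Real.log (∑ j', P j' k) ≤ M := by
    intro j k
    rw [← hval]
    have hk := le_ciSup (f := fun k => Real.log (P j k ^ mu / ((∑ k', P j k') * (∑ j', P j' k))))
      (Set.Finite.bddAbove (Set.finite_range _)) k
    exact le_ciSup_of_le (Set.Finite.bddAbove (Set.finite_range _)) j hk
  -- upper bound
  have hub : ∀ x ∈ bucketInfoSet P 1 1 mu, x ≤ M := by
    rintro x ⟨Q, hQ0, hQsum, rfl⟩
    have hQr : ∀ j k, Q j k ≤ ∑ k', Q j k' :=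
      fun j k => Finset.single_le_sum (fun k' _ => hQ0 j k') (Finset.mem_univ k)
    have hQc : ∀ j k, Q j k ≤ ∑ j', Q j' k :=
      fun j k => Finset.single_le_sum (fun j' _ => hQ0 j' k) (Finset.mem_univ j)
    have hQ1 : ∀ j k, Q j k ≤ 1 := by
      intro j k
      calc Q j k ≤ ∑ k', Q j k' := hQr j k
        _ ≤ ∑ j', ∑ k', Q j' k' :=
          Finset.single_le_sum (fun j' _ => Finset.sum_nonneg fun k' _ => hQ0 j' k')
            (Finset.mem_univ j)
        _ = 1 := hQsum
    have key : ∀ j k,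
        Q j k * Real.log ((∑ k', Q j k') / (∑ k', P j k')) +
          Q j k * Real.log ((∑ j', Q j' k) / (∑ j', P j' k)) -
          mu * (Q j k * Real.log (Q j k / P j k)) ≤
        Q j k * M + (∑ k', Q j k') * (∑ j', Q j' k) - Q j k :=
      fun j k => bucket_aux_term _ _ _ _ _ _ _ _ (hPpos j k) (hprpos j) (hpcpos k)
        (hQ0 j k) (hQ1 j k) (hQr j k) (hQc j k) hmu1 (hMle j k)
    have hA : (∑ j, (∑ k, Q j k) * Real.log ((∑ k, Q j k) / (∑ k, P j k))) =
        ∑ j, ∑ k, Q j k * Real.log ((∑ k', Q j k') / (∑ k', P j k')) :=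
      Finset.sum_congr rfl fun j _ => Finset.sum_mul _ _ _
    have hB : (∑ k, (∑ j, Q j k) * Real.log ((∑ j, Q j k) / (∑ j, P j k))) =
        ∑ j, ∑ k, Q j k * Real.log ((∑ j', Q j' k) / (∑ j', P j' k)) := by
      rw [Finset.sum_comm]
      exact Finset.sum_congr rfl fun k _ => Finset.sum_mul _ _ _
    have hc1 : ∑ k, ∑ j', Q j' k = 1 := by rw [Finset.sum_comm]; exact hQsum
    have t1 : ∑ j, ∑ k, Q j k * M = M := by
      simp only [← Finset.sum_mul]
      rw [hQsum, one_mul]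
    have t2 : ∑ j, ∑ k, (∑ k', Q j k') * (∑ j', Q j' k) = 1 := by
      have h : ∀ j, (∑ k, (∑ k', Q j k') * (∑ j', Q j' k)) = ∑ k', Q j k' := by
        intro j; rw [← Finset.mul_sum, hc1, mul_one]
      rw [Finset.sum_congr rfl fun j _ => h j]
      exact hQsum
    calc (1:ℝ) * (∑ j, (∑ k, Q j k) * Real.log ((∑ k, Q j k) / (∑ k, P j k))) +
          1 * (∑ k, (∑ j, Q j k) * Real.log ((∑ j, Q j k) / (∑ j, P j k))) -
          mu * (∑ j, ∑ k, Q j k * Real.log (Q j k / P j k))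
        = ∑ j, ∑ k, (Q j k * Real.log ((∑ k', Q j k') / (∑ k', P j k')) +
            Q j k * Real.log ((∑ j', Q j' k) / (∑ j', P j' k)) -
            mu * (Q j k * Real.log (Q j k / P j k))) := by
          rw [one_mul, one_mul, hA, hB, Finset.mul_sum]
          simp_rw [Finset.mul_sum]
          rw [← Finset.sum_add_distrib, ← Finset.sum_sub_distrib]
          exact Finset.sum_congr rfl fun j _ => by
            rw [← Finset.sum_add_distrib, ← Finset.sum_sub_distrib]
      _ ≤ ∑ j, ∑ k, (Q j k * M + (∑ k', Q j k') * (∑ j', Q j' k) - Q j k) :=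
          Finset.sum_le_sum fun j _ => Finset.sum_le_sum fun k _ => key j k
      _ = M := by
          simp only [Finset.sum_sub_distrib, Finset.sum_add_distrib]
          rw [t1, t2, hQsum]; ring
  -- lower bound: each point mass is in the set
  have hmem : ∀ j₀ k₀,
      Real.log (P j₀ k₀ ^ mu / ((∑ k', P j₀ k') * (∑ j', P j' k₀))) ∈
        bucketInfoSet P 1 1 mu := by
    intro j₀ k₀
    set Q : Fin b₀ → Fin b₁ → ℝ :=
      fun j k => (if j = j₀ then (1:ℝ) else 0) * (if k = k₀ then 1 else 0) with hQdef
    have hrow : ∀ j, (∑ k, Q j k) = if j = j₀ then (1:ℝ) else 0 := by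
      intro j
      simp [hQdef, ← Finset.mul_sum, Finset.sum_ite_eq']
    have hcol : ∀ k, (∑ j, Q j k) = if k = k₀ then (1:ℝ) else 0 := by
      intro k
      simp [hQdef, ← Finset.sum_mul, Finset.sum_ite_eq']
    refine ⟨Q, ?_, ?_, ?_⟩
    · intro j k
      by_cases h1 : j = j₀ <;> by_cases h2 : k = k₀ <;> simp [hQdef, h1, h2]
    · simp only [hrow]
      simp [Finset.sum_ite_eq']
    · have h1 : (∑ j, (∑ k, Q j k) * Real.log ((∑ k, Q j k) / (∑ k, P j k))) =
          - Real.log (∑ k, P j₀ k) := by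
        simp only [hrow]
        rw [Finset.sum_eq_single j₀]
        · simp [Real.log_div one_ne_zero (ne_of_gt (hprpos j₀))]
        · intro b _ hb; simp [hb]
        · simp
      have h2 : (∑ k, (∑ j, Q j k) * Real.log ((∑ j, Q j k) / (∑ j, P j k))) =
          - Real.log (∑ j, P j k₀) := by
        simp only [hcol]
        rw [Finset.sum_eq_single k₀]
        · simp [Real.log_div one_ne_zero (ne_of_gt (hpcpos k₀))]
        · intro b _ hb; simp [hb]
        · simp
      have h3 : (∑ j, ∑ k, Q j k * Real.log (Q j k / P j k)) =
          - Real.log (P j₀ k₀) := by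
        rw [Finset.sum_eq_single j₀]
        · rw [Finset.sum_eq_single k₀]
          · simp [hQdef, Real.log_div one_ne_zero (ne_of_gt (hPpos j₀ k₀))]
          · intro b _ hb; simp [hQdef, hb]
          · simp
        · intro b _ hb
          apply Finset.sum_eq_zero
          intro k _
          simp [hQdef, hb]
        · simp
      rw [h1, h2, h3, hval j₀ k₀]
      ring
  apply le_antisymm
  · exact csSup_le ⟨_, hmem (Classical.arbitrary _) (Classical.arbitrary _)⟩ hub
  · exact ciSup_le fun j => ciSup_le fun k => le_csSup ⟨M, hub⟩ (hmem j k)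
end

section
/- For probability matrices P₁ (b₀×b₁) and P₂ (c₀×c₁) with positive entries and 0 ≤ μ ≤ 1, the bucketing information I(P, λ₀, λ₁, μ) = sup_Q [λ₀·K(Q_{·*}‖P_{·*}) + λ₁·K(Q_{*·}‖P_{*·}) − μ·K(Q‖P)] is additive under tensor products: I(P₁⊗P₂, λ₀, λ₁, μ) = I(P₁, λ₀, λ₁, μ) + I(P₂, λ₀, λ₁, μ), for any λ₀, λ₁ ≤ 1 ≤ λ₀+λ₁. -/
open Finset

/-!
Superadditivity: for feasible `Q₁, Q₂` the tensor product `Q₁ ⊗ Q₂` is feasible for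
`P₁ ⊗ P₂`, and all three divergences split additively on it.

Subadditivity: write a feasible `Q` for `P₁ ⊗ P₂` as `A ⊗ B`, where `A` is its marginal on the
first factor and `B j k` the conditional law of the second factor. The joint divergence obeys the
chain rule `K(Q‖P₁⊗P₂) = K(A‖P₁) + ∑ A j k · K(B j k‖P₂)` exactly, while for the marginal
divergences convexity (the log-sum inequality) only gives `≤`. As `λ₀, λ₁ ≥ 0`, the objective at
`Q` is at most the objective of `P₁` at `A` plus the `A`-average of the objectives of `P₂` at the
`B j k`, hence at most `I(P₁) + I(P₂)`.
-/

open Real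

noncomputable def klTerm (a b : ℝ) : ℝ := a * log (a / b)

@[simp] lemma klTerm_zero_left (b : ℝ) : klTerm 0 b = 0 := zero_mul _

lemma klTerm_mul_mul (a c : ℝ) {b d : ℝ} (hb : b ≠ 0) (hd : d ≠ 0) :
    klTerm (a * c) (b * d) = c * klTerm a b + a * klTerm c d := by
  rcases eq_or_ne a 0 with rfl | ha
  · simp
  rcases eq_or_ne c 0 with rfl | hc
  · simp
  rw [klTerm, klTerm, klTerm, ← div_mul_div_comm,
    log_mul (div_ne_zero ha hb) (div_ne_zero hc hd)]
  ring

lemma klTerm_mul_mul_left (w x y : ℝ) : klTerm (w * x) (w * y) = w * klTerm x y := by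
  rcases eq_or_ne w 0 with rfl | hw
  · simp
  rw [klTerm, klTerm, mul_div_mul_left _ _ hw, mul_assoc]

lemma klTerm_mul_right (x : ℝ) {c y : ℝ} (hc : c ≠ 0) (hy : y ≠ 0) :
    klTerm x (c * y) = klTerm x y - x * log c := by
  rcases eq_or_ne x 0 with rfl | hx
  · simp
  rw [klTerm, klTerm, div_mul_eq_div_div_swap, log_div (div_ne_zero hx hy) hc]
  ring

lemma tangent_le_klTerm {a b t : ℝ} (ha : 0 ≤ a) (hb : 0 ≤ b) (hab : b = 0 → a = 0)
    (ht : 0 < t) : a * log t + a - b * t ≤ klTerm a b := by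
  rcases ha.eq_or_lt with rfl | ha
  · simpa using mul_nonneg hb ht.le
  have hb : 0 < b := hb.lt_of_ne fun h => ha.ne' (hab h.symm)
  have key := log_le_sub_one_of_pos (show 0 < b * t / a by positivity)
  rw [log_div (by positivity) ha.ne', log_mul hb.ne' ht.ne'] at key
  rw [klTerm, log_div ha.ne' hb.ne']
  have hbt : a * (b * t / a) = b * t := mul_div_cancel₀ _ ha.ne'
  linarith [mul_le_mul_of_nonneg_left key ha.le]

/-- The log-sum inequality: the tangent bound at `t = ∑ a / ∑ b` is exact on the left. -/
theorem klTerm_sum_le_sum {ι : Type*} (s : Finset ι) {a b : ι → ℝ}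
    (ha : ∀ i ∈ s, 0 ≤ a i) (hb : ∀ i ∈ s, 0 ≤ b i) (hab : ∀ i ∈ s, b i = 0 → a i = 0) :
    klTerm (∑ i ∈ s, a i) (∑ i ∈ s, b i) ≤ ∑ i ∈ s, klTerm (a i) (b i) := by
  rcases (sum_nonneg ha).eq_or_lt with hA | hA
  · have ha₀ := (sum_eq_zero_iff_of_nonneg ha).mp hA.symm
    rw [← hA, klTerm_zero_left, sum_eq_zero fun i hi => by rw [ha₀ i hi, klTerm_zero_left]]
  have hB : 0 < ∑ i ∈ s, b i := by
    refine (sum_nonneg hb).lt_of_ne fun hB => hA.ne' (sum_eq_zero fun i hi => hab i hi ?_)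
    exact (sum_eq_zero_iff_of_nonneg hb).mp hB.symm i hi
  set t := (∑ i ∈ s, a i) / ∑ i ∈ s, b i
  calc klTerm (∑ i ∈ s, a i) (∑ i ∈ s, b i) = ∑ i ∈ s, (a i * log t + a i - b i * t) := by
        rw [sum_sub_distrib, sum_add_distrib, ← sum_mul, ← sum_mul, mul_div_cancel₀ _ hB.ne',
          klTerm]
        ring
    _ ≤ ∑ i ∈ s, klTerm (a i) (b i) :=
        sum_le_sum fun i hi => tangent_le_klTerm (ha i hi) (hb i hi) (hab i hi) (by positivity)

lemma klTerm_le_abs_log {s t : ℝ} (hs₀ : 0 ≤ s) (hs₁ : s ≤ 1) (ht : 0 < t) :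
    klTerm s t ≤ |log t| := by
  rcases hs₀.eq_or_lt with rfl | hs
  · simp
  rw [klTerm, log_div hs.ne' ht.ne', mul_sub]
  have h₁ : s * log s ≤ 0 := mul_nonpos_of_nonneg_of_nonpos hs₀ (log_nonpos hs₀ hs₁)
  have h₂ : s * -log t ≤ |log t| :=
    calc s * -log t ≤ s * |log t| := mul_le_mul_of_nonneg_left (neg_le_abs _) hs₀
      _ ≤ |log t| := mul_le_of_le_one_left (abs_nonneg _) hs₁
  linarith

/-- Chain rule for the divergence of a mixture `∑ₖ wₖ rₖ` from `p · q`: write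
`p qⱼ = (p / a) · ∑ₖ wₖ qⱼ` with `a = ∑ₖ wₖ` and apply the log-sum inequality over `k`. -/
theorem sum_klTerm_mixture_le {κ γ : Type*} [Fintype κ] [Fintype γ] {w : κ → ℝ}
    {r : κ → γ → ℝ} {p : ℝ} {q : γ → ℝ} (hw : 0 ≤ w) (hr : ∀ k j, 0 ≤ r k j)
    (hr₁ : ∀ k, ∑ j, r k j = 1) (hp : 0 < p) (hq : ∀ j, 0 < q j) :
    ∑ j, klTerm (∑ k, w k * r k j) (p * q j)
      ≤ klTerm (∑ k, w k) p + ∑ k, w k * ∑ j, klTerm (r k j) (q j) := by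
  rcases (Fintype.sum_nonneg hw).eq_or_lt with ha | ha
  · simp [(Fintype.sum_eq_zero_iff_of_nonneg hw).mp ha.symm]
  set a := ∑ k, w k
  have step : ∀ j, klTerm (∑ k, w k * r k j) (p * q j)
      ≤ ∑ k, w k * klTerm (r k j) (q j) + (∑ k, w k * r k j) * log (a / p) := by
    intro j
    have hdenom : a / p * (p * q j) = ∑ k, w k * q j := by
      rw [← sum_mul, ← mul_assoc, div_mul_cancel₀ a hp.ne']
    have hsplit := klTerm_mul_right (∑ k, w k * r k j) (div_ne_zero ha.ne' hp.ne')
      (mul_ne_zero hp.ne' (hq j).ne')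
    rw [hdenom] at hsplit
    have hlogsum : klTerm (∑ k, w k * r k j) (∑ k, w k * q j)
        ≤ ∑ k, w k * klTerm (r k j) (q j) := by
      simp only [← klTerm_mul_mul_left]
      exact klTerm_sum_le_sum _ (fun k _ => mul_nonneg (hw k) (hr k j))
        (fun k _ => mul_nonneg (hw k) (hq j).le)
        (fun k _ h => by rw [(mul_eq_zero.mp h).resolve_right (hq j).ne', zero_mul])
    linarith
  calc ∑ j, klTerm (∑ k, w k * r k j) (p * q j)
      ≤ ∑ j, (∑ k, w k * klTerm (r k j) (q j) + (∑ k, w k * r k j) * log (a / p)) :=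
        sum_le_sum fun j _ => step j
    _ = klTerm a p + ∑ k, w k * ∑ j, klTerm (r k j) (q j) := by
        rw [sum_add_distrib, ← sum_mul, sum_comm, sum_comm (f := fun j k => w k * r k j)]
        simp only [← mul_sum, hr₁, mul_one, klTerm]
        ring

section Matrices

open Function

variable {α β γ δ : Type*}

/-- The law of `((J₁, J₂), (K₁, K₂))` when `(J₁, K₁)` has law `A` and `(J₂, K₂)` has conditional
law `B J₁ K₁`; the tensor product `P₁ ⊗ P₂` is `condProd P₁ fun _ _ => P₂`. -/
def condProd (A : α → β → ℝ) (B : α → β → γ → δ → ℝ) : α × γ → β × δ → ℝ :=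
  fun j k => A j.1 k.1 * B j.1 k.1 j.2 k.2

lemma swap_condProd (A : α → β → ℝ) (B : α → β → γ → δ → ℝ) :
    swap (condProd A B) = condProd (swap A) fun k j => swap (B j k) :=
  rfl

lemma sum_condProd_apply [Fintype β] [Fintype δ] (A : α → β → ℝ) (B : α → β → γ → δ → ℝ)
    (j : α × γ) : ∑ k, condProd A B j k = ∑ k₁, A j.1 k₁ * ∑ k₂, B j.1 k₁ j.2 k₂ := by
  simp only [condProd, Fintype.sum_prod_type, mul_sum]

lemma sum_pos_of_forall_pos [Fintype β] [Nonempty β] {P : α → β → ℝ} (hP : ∀ j k, 0 < P j k)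
    (j : α) : 0 < ∑ k, P j k :=
  sum_pos (fun k _ => hP j k) univ_nonempty

variable [Fintype α] [Fintype β] [Fintype γ] [Fintype δ]

lemma sum_sum_prod_prod (f : α → β → γ → δ → ℝ) :
    ∑ j : α × γ, ∑ k : β × δ, f j.1 k.1 j.2 k.2 = ∑ j₁, ∑ k₁, ∑ j₂, ∑ k₂, f j₁ k₁ j₂ k₂ := by
  simp only [Fintype.sum_prod_type]
  exact sum_congr rfl fun _ _ => sum_comm

lemma nonempty_of_sum_sum_ne_zero {f : α → β → ℝ} (h : ∑ j, ∑ k, f j k ≠ 0) :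
    Nonempty α ∧ Nonempty β := by
  obtain ⟨j, -, hj⟩ := exists_ne_zero_of_sum_ne_zero h
  obtain ⟨k, -, -⟩ := exists_ne_zero_of_sum_ne_zero hj
  exact ⟨⟨j⟩, ⟨k⟩⟩

structure IsProbMatrix (Q : α → β → ℝ) : Prop where
  nonneg : ∀ j k, 0 ≤ Q j k
  sum_eq_one : ∑ j, ∑ k, Q j k = 1

/-- `K(Q_{·*}‖P_{·*})`; the column term `K(Q_{*·}‖P_{*·})` is `rowKL (swap P) (swap Q)`. -/
noncomputable def rowKL (P Q : α → β → ℝ) : ℝ :=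
  ∑ j, klTerm (∑ k, Q j k) (∑ k, P j k)

noncomputable def jointKL (P Q : α → β → ℝ) : ℝ :=
  ∑ j, ∑ k, klTerm (Q j k) (P j k)

noncomputable def bucketObjective (P Q : α → β → ℝ) (lam0 lam1 mu : ℝ) : ℝ :=
  lam0 * rowKL P Q + lam1 * rowKL (swap P) (swap Q) - mu * jointKL P Q

lemma mem_bucketInfoSet {P : α → β → ℝ} {lam0 lam1 mu x : ℝ} :
    x ∈ bucketInfoSet P lam0 lam1 mu ↔
      ∃ Q, IsProbMatrix Q ∧ bucketObjective P Q lam0 lam1 mu = x :=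
  ⟨fun ⟨Q, h₀, h₁, hx⟩ => ⟨Q, ⟨h₀, h₁⟩, hx.symm⟩, fun ⟨Q, hQ, hx⟩ => ⟨Q, hQ.1, hQ.2, hx.symm⟩⟩

namespace IsProbMatrix

variable {Q : α → β → ℝ}

lemma swap (hQ : IsProbMatrix Q) : IsProbMatrix (swap Q) :=
  ⟨fun k j => hQ.nonneg j k, by rw [sum_comm]; exact hQ.sum_eq_one⟩

lemma sum_le_one (hQ : IsProbMatrix Q) (j : α) : ∑ k, Q j k ≤ 1 :=
  hQ.sum_eq_one ▸ single_le_sum (fun j _ => sum_nonneg fun k _ => hQ.nonneg j k) (mem_univ j)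

lemma sum_mul_le (hQ : IsProbMatrix Q) {f : α → β → ℝ} {c : ℝ} (hf : ∀ j k, f j k ≤ c) :
    ∑ j, ∑ k, Q j k * f j k ≤ c :=
  calc ∑ j, ∑ k, Q j k * f j k ≤ ∑ j, ∑ k, Q j k * c :=
        sum_le_sum fun j _ => sum_le_sum fun k _ =>
          mul_le_mul_of_nonneg_left (hf j k) (hQ.nonneg j k)
    _ = c := by simp only [← sum_mul, hQ.sum_eq_one, one_mul]

lemma condProd (hQ : IsProbMatrix Q) {B : α → β → γ → δ → ℝ}
    (hB : ∀ j k, IsProbMatrix (B j k)) : IsProbMatrix (condProd Q B) := by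
  refine ⟨fun j k => mul_nonneg (hQ.nonneg _ _) ((hB _ _).nonneg _ _), ?_⟩
  refine (sum_sum_prod_prod fun j₁ k₁ j₂ k₂ => Q j₁ k₁ * B j₁ k₁ j₂ k₂).trans ?_
  simp only [← mul_sum, (hB _ _).sum_eq_one, mul_one, hQ.sum_eq_one]

/-- Conditioning on the first factor; `R` is the conditional law given an outcome of mass `0`. -/
lemma exists_eq_condProd {Q : α × γ → β × δ → ℝ} (hQ : IsProbMatrix Q) {R : γ → δ → ℝ}
    (hR : IsProbMatrix R) :
    ∃ (A : α → β → ℝ) (B : α → β → γ → δ → ℝ),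
      IsProbMatrix A ∧ (∀ j k, IsProbMatrix (B j k)) ∧ Q = _root_.condProd A B := by
  set A : α → β → ℝ := fun j₁ k₁ => ∑ j₂, ∑ k₂, Q (j₁, j₂) (k₁, k₂)
  have hA₀ : ∀ j k, 0 ≤ A j k := fun j k =>
    sum_nonneg fun _ _ => sum_nonneg fun _ _ => hQ.nonneg _ _
  have hQA : ∀ j₁ k₁ j₂ k₂, Q (j₁, j₂) (k₁, k₂) ≤ A j₁ k₁ := fun j₁ k₁ j₂ k₂ =>
    (single_le_sum (fun _ _ => hQ.nonneg _ _) (mem_univ k₂)).trans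
      (single_le_sum (f := fun j₂ => ∑ k₂, Q (j₁, j₂) (k₁, k₂))
        (fun _ _ => sum_nonneg fun _ _ => hQ.nonneg _ _) (mem_univ j₂))
  refine ⟨A, fun j k => if A j k = 0 then R else fun j₂ k₂ => Q (j, j₂) (k, k₂) / A j k,
    ⟨hA₀, (sum_sum_prod_prod fun j₁ k₁ j₂ k₂ => Q (j₁, j₂) (k₁, k₂)).symm.trans hQ.sum_eq_one⟩,
    fun j k => ?_, ?_⟩
  · dsimp only
    split_ifs with h
    · exact hR
    · exact ⟨fun _ _ => div_nonneg (hQ.nonneg _ _) (hA₀ j k),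
        by simp only [← sum_div]; exact div_self h⟩
  · ext ⟨j₁, j₂⟩ ⟨k₁, k₂⟩
    simp only [_root_.condProd]
    split_ifs with h
    · rw [h, zero_mul]
      exact le_antisymm (h ▸ hQA j₁ k₁ j₂ k₂) (hQ.nonneg _ _)
    · rw [mul_div_cancel₀ _ h]

lemma bucketInfoSet_nonempty (hQ : IsProbMatrix Q) (lam0 lam1 mu : ℝ) :
    (bucketInfoSet Q lam0 lam1 mu).Nonempty :=
  ⟨_, mem_bucketInfoSet.mpr ⟨Q, hQ, rfl⟩⟩

end IsProbMatrix

variable {P₁ : α → β → ℝ} {P₂ : γ → δ → ℝ}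

lemma rowKL_condProd_le (hP₁ : ∀ j, 0 < ∑ k, P₁ j k) (hP₂ : ∀ j, 0 < ∑ k, P₂ j k)
    {A : α → β → ℝ} {B : α → β → γ → δ → ℝ} (hA : ∀ j k, 0 ≤ A j k)
    (hB : ∀ j k, IsProbMatrix (B j k)) :
    rowKL (condProd P₁ fun _ _ => P₂) (condProd A B)
      ≤ rowKL P₁ A + ∑ j, ∑ k, A j k * rowKL P₂ (B j k) := by
  rw [rowKL, Fintype.sum_prod_type]
  simp only [sum_condProd_apply, ← sum_mul, rowKL, ← sum_add_distrib]
  exact sum_le_sum fun j _ => sum_klTerm_mixture_le (hA j)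
    (fun k j' => sum_nonneg fun k' _ => (hB j k).nonneg j' k') (fun k => (hB j k).sum_eq_one)
    (hP₁ j) hP₂

lemma rowKL_tensor (hP₁ : ∀ j, ∑ k, P₁ j k ≠ 0) (hP₂ : ∀ j, ∑ k, P₂ j k ≠ 0)
    {Q₁ : α → β → ℝ} {Q₂ : γ → δ → ℝ} (hQ₁ : ∑ j, ∑ k, Q₁ j k = 1)
    (hQ₂ : ∑ j, ∑ k, Q₂ j k = 1) :
    rowKL (condProd P₁ fun _ _ => P₂) (condProd Q₁ fun _ _ => Q₂)
      = rowKL P₁ Q₁ + rowKL P₂ Q₂ := by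
  rw [rowKL, Fintype.sum_prod_type]
  simp only [sum_condProd_apply, ← sum_mul, klTerm_mul_mul _ _ (hP₁ _) (hP₂ _), sum_add_distrib,
    ← mul_sum]
  rw [hQ₁, hQ₂, one_mul, one_mul, rowKL, rowKL]

lemma jointKL_condProd (hP₁ : ∀ j k, P₁ j k ≠ 0) (hP₂ : ∀ j k, P₂ j k ≠ 0) (A : α → β → ℝ)
    {B : α → β → γ → δ → ℝ} (hB : ∀ j k, ∑ j', ∑ k', B j k j' k' = 1) :
    jointKL (condProd P₁ fun _ _ => P₂) (condProd A B)
      = jointKL P₁ A + ∑ j, ∑ k, A j k * jointKL P₂ (B j k) := by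
  refine (sum_sum_prod_prod fun j₁ k₁ j₂ k₂ =>
    klTerm (A j₁ k₁ * B j₁ k₁ j₂ k₂) (P₁ j₁ k₁ * P₂ j₂ k₂)).trans ?_
  simp only [jointKL, klTerm_mul_mul _ _ (hP₁ _ _) (hP₂ _ _), sum_add_distrib, ← sum_mul,
    ← mul_sum, hB, one_mul]

lemma jointKL_nonneg {P Q : α → β → ℝ} (hP : ∀ j k, 0 < P j k) (hPs : ∑ j, ∑ k, P j k = 1)
    (hQ : IsProbMatrix Q) : 0 ≤ jointKL P Q := by
  have h := klTerm_sum_le_sum (univ : Finset (α × β)) (a := fun x => Q x.1 x.2)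
    (b := fun x => P x.1 x.2) (fun x _ => hQ.nonneg _ _) (fun x _ => (hP _ _).le)
    (fun x _ h => absurd h (hP _ _).ne')
  simp only [Fintype.sum_prod_type, hQ.sum_eq_one, hPs] at h
  simpa [klTerm, jointKL] using h

lemma rowKL_le_sum_abs_log {P Q : α → β → ℝ} (hP : ∀ j, 0 < ∑ k, P j k)
    (hQ : IsProbMatrix Q) : rowKL P Q ≤ ∑ j, |log (∑ k, P j k)| :=
  sum_le_sum fun j _ =>
    klTerm_le_abs_log (sum_nonneg fun k _ => hQ.nonneg j k) (hQ.sum_le_one j) (hP j)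

lemma bddAbove_bucketInfoSet [Nonempty α] [Nonempty β] {P : α → β → ℝ} (hP : ∀ j k, 0 < P j k)
    (hPs : ∑ j, ∑ k, P j k = 1) {lam0 lam1 mu : ℝ} (hlam0 : 0 ≤ lam0) (hlam1 : 0 ≤ lam1)
    (hmu : 0 ≤ mu) : BddAbove (bucketInfoSet P lam0 lam1 mu) := by
  refine ⟨lam0 * ∑ j, |log (∑ k, P j k)| + lam1 * ∑ k, |log (∑ j, P j k)|, fun x hx => ?_⟩
  obtain ⟨Q, hQ, rfl⟩ := mem_bucketInfoSet.mp hx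
  have hrow := rowKL_le_sum_abs_log (sum_pos_of_forall_pos hP) hQ
  have hcol := rowKL_le_sum_abs_log (P := swap P)
    (sum_pos_of_forall_pos fun k j => hP j k) hQ.swap
  have hjoint := mul_nonneg hmu (jointKL_nonneg hP hPs hQ)
  dsimp only [bucketObjective]
  linarith [mul_le_mul_of_nonneg_left hrow hlam0, mul_le_mul_of_nonneg_left hcol hlam1]

variable [Nonempty α] [Nonempty β] [Nonempty γ] [Nonempty δ]

lemma bucketObjective_condProd_le (hP₁ : ∀ j k, 0 < P₁ j k) (hP₂ : ∀ j k, 0 < P₂ j k)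
    {A : α → β → ℝ} {B : α → β → γ → δ → ℝ} (hA : ∀ j k, 0 ≤ A j k)
    (hB : ∀ j k, IsProbMatrix (B j k)) {lam0 lam1 : ℝ} (hlam0 : 0 ≤ lam0) (hlam1 : 0 ≤ lam1)
    (mu : ℝ) :
    bucketObjective (condProd P₁ fun _ _ => P₂) (condProd A B) lam0 lam1 mu
      ≤ bucketObjective P₁ A lam0 lam1 mu
        + ∑ j, ∑ k, A j k * bucketObjective P₂ (B j k) lam0 lam1 mu := by
  have hrow := rowKL_condProd_le (sum_pos_of_forall_pos hP₁) (sum_pos_of_forall_pos hP₂) hA hB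
  have hcol := rowKL_condProd_le (P₁ := swap P₁) (P₂ := swap P₂) (A := swap A)
    (B := fun k j => swap (B j k)) (sum_pos_of_forall_pos fun k j => hP₁ j k)
    (sum_pos_of_forall_pos fun k j => hP₂ j k) (fun k j => hA j k) (fun k j => (hB j k).swap)
  rw [sum_comm] at hcol
  have hjoint := jointKL_condProd (fun j k => (hP₁ j k).ne') (fun j k => (hP₂ j k).ne') A
    fun j k => (hB j k).sum_eq_one
  simp only [bucketObjective, swap_condProd, hjoint, mul_sub, mul_add, sum_sub_distrib,
    sum_add_distrib, mul_left_comm _ lam0, mul_left_comm _ lam1, mul_left_comm _ mu, ← mul_sum]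
  linarith [mul_le_mul_of_nonneg_left hrow hlam0, mul_le_mul_of_nonneg_left hcol hlam1]

lemma bucketObjective_tensor (hP₁ : ∀ j k, 0 < P₁ j k) (hP₂ : ∀ j k, 0 < P₂ j k)
    {Q₁ : α → β → ℝ} {Q₂ : γ → δ → ℝ} (hQ₁ : ∑ j, ∑ k, Q₁ j k = 1)
    (hQ₂ : ∑ j, ∑ k, Q₂ j k = 1) (lam0 lam1 mu : ℝ) :
    bucketObjective (condProd P₁ fun _ _ => P₂) (condProd Q₁ fun _ _ => Q₂) lam0 lam1 mu
      = bucketObjective P₁ Q₁ lam0 lam1 mu + bucketObjective P₂ Q₂ lam0 lam1 mu := by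
  have hrow := rowKL_tensor (sum_pos_of_forall_pos hP₁ · |>.ne')
    (sum_pos_of_forall_pos hP₂ · |>.ne') hQ₁ hQ₂
  have hcol := rowKL_tensor (P₁ := swap P₁) (P₂ := swap P₂) (Q₁ := swap Q₁) (Q₂ := swap Q₂)
    (sum_pos_of_forall_pos (fun k j => hP₁ j k) · |>.ne')
    (sum_pos_of_forall_pos (fun k j => hP₂ j k) · |>.ne')
    (by rw [sum_comm]; exact hQ₁) (by rw [sum_comm]; exact hQ₂)
  have hjoint := jointKL_condProd (fun j k => (hP₁ j k).ne') (fun j k => (hP₂ j k).ne') Q₁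
    fun _ _ => hQ₂
  simp only [← sum_mul, hQ₁, one_mul] at hjoint
  simp only [bucketObjective, swap_condProd, hrow, hcol, hjoint]
  ring

end Matrices

theorem bucketInfo_tensor_additive_general (b₀ b₁ c₀ c₁ : ℕ)
    (P₁ : Fin b₀ → Fin b₁ → ℝ) (P₂ : Fin c₀ → Fin c₁ → ℝ)
    (hP₁pos : ∀ j k, 0 < P₁ j k) (hP₁sum : ∑ j, ∑ k, P₁ j k = 1)
    (hP₂pos : ∀ j k, 0 < P₂ j k) (hP₂sum : ∑ j, ∑ k, P₂ j k = 1)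
    (lam0 lam1 mu : ℝ) (hl0 : lam0 ≤ 1) (hl1 : lam1 ≤ 1) (hls : 1 ≤ lam0 + lam1)
    (hmu0 : 0 ≤ mu) :
    sSup (bucketInfoSet (fun (j : Fin b₀ × Fin c₀) (k : Fin b₁ × Fin c₁) =>
        P₁ j.1 k.1 * P₂ j.2 k.2) lam0 lam1 mu) =
      sSup (bucketInfoSet P₁ lam0 lam1 mu) + sSup (bucketInfoSet P₂ lam0 lam1 mu) := by
  have hlam0 : 0 ≤ lam0 := by linarith
  have hlam1 : 0 ≤ lam1 := by linarith
  obtain ⟨_, _⟩ := nonempty_of_sum_sum_ne_zero (hP₁sum ▸ one_ne_zero)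
  obtain ⟨_, _⟩ := nonempty_of_sum_sum_ne_zero (hP₂sum ▸ one_ne_zero)
  have hP₁ : IsProbMatrix P₁ := ⟨fun j k => (hP₁pos j k).le, hP₁sum⟩
  have hP₂ : IsProbMatrix P₂ := ⟨fun j k => (hP₂pos j k).le, hP₂sum⟩
  have hP := hP₁.condProd fun _ _ => hP₂
  have bdd₁ := bddAbove_bucketInfoSet hP₁pos hP₁sum hlam0 hlam1 hmu0
  have bdd₂ := bddAbove_bucketInfoSet hP₂pos hP₂sum hlam0 hlam1 hmu0
  have bdd := bddAbove_bucketInfoSet (fun _ _ => mul_pos (hP₁pos _ _) (hP₂pos _ _))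
    hP.sum_eq_one hlam0 hlam1 hmu0
  have ne₁ := hP₁.bucketInfoSet_nonempty lam0 lam1 mu
  have ne₂ := hP₂.bucketInfoSet_nonempty lam0 lam1 mu
  refine le_antisymm (csSup_le (hP.bucketInfoSet_nonempty _ _ _) fun x hx => ?_) ?_
  · obtain ⟨Q, hQ, rfl⟩ := mem_bucketInfoSet.mp hx
    obtain ⟨A, B, hA, hB, rfl⟩ := hQ.exists_eq_condProd hP₂
    refine (bucketObjective_condProd_le hP₁pos hP₂pos hA.nonneg hB hlam0 hlam1 mu).trans
      (add_le_add (le_csSup bdd₁ ?_) (hA.sum_mul_le fun j k => le_csSup bdd₂ ?_))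
    exacts [mem_bucketInfoSet.mpr ⟨A, hA, rfl⟩, mem_bucketInfoSet.mpr ⟨B j k, hB j k, rfl⟩]
  · rw [← csSup_add ne₁ bdd₁ ne₂ bdd₂]
    refine csSup_le_csSup bdd (ne₁.add ne₂) (Set.add_subset_iff.mpr fun _ hx₁ _ hx₂ => ?_)
    obtain ⟨Q₁, hQ₁, rfl⟩ := mem_bucketInfoSet.mp hx₁
    obtain ⟨Q₂, hQ₂, rfl⟩ := mem_bucketInfoSet.mp hx₂
    exact mem_bucketInfoSet.mpr ⟨_, hQ₁.condProd fun _ _ => hQ₂,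
      bucketObjective_tensor hP₁pos hP₂pos hQ₁.sum_eq_one hQ₂.sum_eq_one lam0 lam1 mu⟩

/-- Additivity of bucketing information under tensor products, for
`0 ≤ μ ≤ 1` and `λ₀, λ₁ ≤ 1 ≤ λ₀+λ₁`:
`I(P₁⊗P₂, λ₀, λ₁, μ) = I(P₁, λ₀, λ₁, μ) + I(P₂, λ₀, λ₁, μ)`. -/
theorem bucketInfo_tensor_additive (b₀ b₁ c₀ c₁ : ℕ)
    (P₁ : Fin b₀ → Fin b₁ → ℝ) (P₂ : Fin c₀ → Fin c₁ → ℝ)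
    (hP₁pos : ∀ j k, 0 < P₁ j k) (hP₁sum : ∑ j, ∑ k, P₁ j k = 1)
    (hP₂pos : ∀ j k, 0 < P₂ j k) (hP₂sum : ∑ j, ∑ k, P₂ j k = 1)
    (lam0 lam1 mu : ℝ) (hl0 : lam0 ≤ 1) (hl1 : lam1 ≤ 1) (hls : 1 ≤ lam0 + lam1)
    (hmu0 : 0 ≤ mu) (hmu1 : mu ≤ 1) :
    sSup (bucketInfoSet (fun (j : Fin b₀ × Fin c₀) (k : Fin b₁ × Fin c₁) =>
        P₁ j.1 k.1 * P₂ j.2 k.2) lam0 lam1 mu) =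
      sSup (bucketInfoSet P₁ lam0 lam1 mu) + sSup (bucketInfoSet P₂ lam0 lam1 mu) :=
  bucketInfo_tensor_additive_general b₀ b₁ c₀ c₁ P₁ P₂ hP₁pos hP₁sum hP₂pos hP₂sum lam0 lam1 mu hl0
    hl1 hls hmu0
end

section
/- Let x₀, x₁ ∈ {0,1}^d differ in exactly m coordinates, and let b be uniformly random on {0,1}^d. Let B(b) = {x : x agrees with b in exactly d₀−1 or d₀ coordinates}. Then P(x₀ ∈ B(b) and x₁ ∈ B(b)) = 2^{−d}·C(m, ⌊m/2⌋)·[C(d−m, d₀−⌈m/2⌉) + C(d−m, d₀−⌈(m+1)/2⌉)]. -/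
/-!
Identify `b` with the set `A` of coordinates where it agrees with `x₀`. If `S` is the set of
`m` coordinates where `x₀` and `x₁` differ, then `x₁` agrees with `b` exactly on `A ∆ S`, of size
`#A + m - 2 #(A ∩ S)`. Both agreement counts lie in `{d₀ - 1, d₀}` iff `(#(A ∩ S), #A)` is
`(⌊m/2⌋, d₀ - 1)` or `(⌈m/2⌉, d₀)`, and there are `C(m, j) C(d - m, n - j)` sets `A` with
`#(A ∩ S) = j` and `#A = n`.
-/

open Finset

/-- Binomial coefficient with integer lower index, equal to `0` for negative
lower index (the convention `C(n,k) = 0` for `k < 0`). -/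
def chooseInt (n : ℕ) (k : ℤ) : ℕ := if 0 ≤ k then n.choose k.toNat else 0

open scoped symmDiff

theorem PMF.toMeasure_uniformOfFintype_setOf {α : Type*} [Fintype α] [Nonempty α]
    [MeasurableSpace α] [MeasurableSingletonClass α] (p : α → Prop) [DecidablePred p] :
    (uniformOfFintype α).toMeasure {a | p a} = #{a | p a} / Fintype.card α := by
  rw [toMeasure_uniformOfFintype_apply _ (Set.toFinite _).measurableSet, Fintype.card_subtype]
  rfl

namespace Finset

variable {ι : Type*} [DecidableEq ι]

theorem card_symmDiff_add_two_mul_card_inter (s t : Finset ι) :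
    #(s ∆ t) + 2 * #(s ∩ t) = #s + #t := by
  rw [symmDiff_def, sup_eq_union, card_union_of_disjoint disjoint_sdiff_sdiff]
  have hs := card_sdiff_add_card_inter s t
  have ht := card_sdiff_add_card_inter t s
  rw [inter_comm] at ht
  omega

theorem union_inter_eq_and_union_sdiff_eq {U V S : Finset ι} (hU : U ⊆ S) (hV : Disjoint V S) :
    (U ∪ V) ∩ S = U ∧ (U ∪ V) \ S = V := by
  rw [union_inter_distrib_right, inter_eq_left.mpr hU, disjoint_iff_inter_eq_empty.mp hV,
    union_sdiff_distrib, sdiff_eq_empty_iff_subset.mpr hU, sdiff_eq_self_of_disjoint hV]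
  simp

variable [Fintype ι]

theorem card_filter_card_inter_eq_and_card_sdiff_eq (S : Finset ι) (j k : ℕ) :
    #{A : Finset ι | #(A ∩ S) = j ∧ #(A \ S) = k} = (#S).choose j * (#Sᶜ).choose k := by
  rw [← card_powersetCard, ← card_powersetCard, ← card_product]
  refine card_nbij' (fun A => (A ∩ S, A \ S)) (fun UV => UV.1 ∪ UV.2) ?_ ?_ ?_ ?_
  · intro A
    simp +contextual [subset_iff]
  · rintro ⟨U, V⟩
    simp only [coe_product, Set.mem_prod, mem_coe, mem_powersetCard, coe_filter, mem_univ,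
      true_and, Set.mem_ofPred_eq]
    rintro ⟨⟨hU, rfl⟩, hV, rfl⟩
    obtain ⟨hinter, hsdiff⟩ :=
      union_inter_eq_and_union_sdiff_eq hU (subset_compl_iff_disjoint_right.mp hV)
    rw [hinter, hsdiff]
    exact ⟨rfl, rfl⟩
  · intro A _
    exact sup_inf_sdiff A S
  · rintro ⟨U, V⟩
    simp only [coe_product, Set.mem_prod, mem_coe, mem_powersetCard]
    rintro ⟨⟨hU, -⟩, hV, -⟩
    obtain ⟨hinter, hsdiff⟩ :=
      union_inter_eq_and_union_sdiff_eq hU (subset_compl_iff_disjoint_right.mp hV)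
    exact Prod.ext hinter hsdiff

theorem card_filter_card_inter_eq_and_card_eq (S : Finset ι) (j n : ℕ) :
    #{A : Finset ι | #(A ∩ S) = j ∧ #A = n} = (#S).choose j * chooseInt (#Sᶜ) (n - j) := by
  have hcard (A : Finset ι) : #A = #(A ∩ S) + #(A \ S) := (card_inter_add_card_sdiff A S).symm
  by_cases hjn : j ≤ n
  · have hpred (A : Finset ι) : #(A ∩ S) = j ∧ #A = n ↔ #(A ∩ S) = j ∧ #(A \ S) = n - j := by
      have := hcard A
      omega
    rw [filter_congr fun A _ => hpred A, card_filter_card_inter_eq_and_card_sdiff_eq, chooseInt,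
      if_pos (by omega), show ((n : ℤ) - j).toNat = n - j by omega]
  · rw [filter_false_of_mem fun A _ => by have := hcard A; omega, card_empty, chooseInt,
      if_neg (by omega), mul_zero]

end Finset

section Agreement

variable {ι : Type*} [Fintype ι] [DecidableEq ι]

def agreementEquiv (x : ι → Bool) : (ι → Bool) ≃ Finset ι where
  toFun b := {i | x i = b i}
  invFun A i := if i ∈ A then x i else !x i
  left_inv b := by
    funext i
    by_cases h : x i = b i <;> simp [h, Bool.eq_not_iff]
  right_inv A := by
    ext i
    by_cases h : i ∈ A <;> simp [h]

theorem filter_eq_symmDiff_filter_ne (x₀ x₁ b : ι → Bool) :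
    ({i | x₁ i = b i} : Finset ι) =
      ({i | x₀ i = b i} : Finset ι) ∆ ({i | x₀ i ≠ x₁ i} : Finset ι) := by
  ext i
  simp only [mem_filter, mem_univ, true_and, mem_symmDiff]
  cases x₀ i <;> cases x₁ i <;> cases b i <;> decide

theorem card_filter_agreements (x₀ x₁ : ι → Bool) (R : ℕ → ℕ → Prop) [DecidableRel R] :
    #{b : ι → Bool | R (#{i | x₀ i = b i}) (#{i | x₁ i = b i})} =
      #{A : Finset ι | R (#A) (#(A ∆ ({i | x₀ i ≠ x₁ i} : Finset ι)))} :=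
  card_equiv (agreementEquiv x₀) fun b => by
    simp [agreementEquiv, filter_eq_symmDiff_filter_ne x₀ x₁ b]

end Agreement

theorem pair_bucket_probability_general (d d₀ m : ℕ) (hd₀ : 0 < d₀)
    (x₀ x₁ : Fin d → Bool)
    (hm : (Finset.univ.filter fun i => x₀ i ≠ x₁ i).card = m) :
    (PMF.uniformOfFintype (Fin d → Bool)).toMeasure
        {b | ((Finset.univ.filter fun i => x₀ i = b i).card = d₀ - 1 ∨
              (Finset.univ.filter fun i => x₀ i = b i).card = d₀) ∧
             ((Finset.univ.filter fun i => x₁ i = b i).card = d₀ - 1 ∨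
              (Finset.univ.filter fun i => x₁ i = b i).card = d₀)} =
      ((m.choose (m / 2) *
          (chooseInt (d - m) ((d₀ : ℤ) - (m + 1) / 2) +
           chooseInt (d - m) ((d₀ : ℤ) - (m + 2) / 2)) : ℕ) : ENNReal) / 2 ^ d := by
  obtain ⟨e, rfl⟩ : ∃ e, d₀ = e + 1 := ⟨d₀ - 1, by omega⟩
  set S : Finset (Fin d) := {i | x₀ i ≠ x₁ i}
  have hbuckets (A : Finset (Fin d)) :
      ((#A = e + 1 - 1 ∨ #A = e + 1) ∧ (#(A ∆ S) = e + 1 - 1 ∨ #(A ∆ S) = e + 1)) ↔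
        (#(A ∩ S) = m / 2 ∧ #A = e) ∨ (#(A ∩ S) = (m + 1) / 2 ∧ #A = e + 1) := by
    have := card_symmDiff_add_two_mul_card_inter A S
    have := card_le_card (inter_subset_left : A ∩ S ⊆ A)
    have := card_le_card (inter_subset_right : A ∩ S ⊆ S)
    omega
  rw [PMF.toMeasure_uniformOfFintype_setOf, card_filter_agreements x₀ x₁
    (fun a c => (a = e + 1 - 1 ∨ a = e + 1) ∧ (c = e + 1 - 1 ∨ c = e + 1)),
    filter_congr fun A _ => hbuckets A, filter_or, card_union_of_disjoint
    (disjoint_filter.mpr fun A _ h₁ h₂ => by omega), card_filter_card_inter_eq_and_card_eq,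
    card_filter_card_inter_eq_and_card_eq, card_compl, hm, Fintype.card_fin,
    Nat.choose_symm_of_eq_add (show m = (m + 1) / 2 + m / 2 by omega),
    show (e : ℤ) - (m / 2 : ℕ) = (e + 1 : ℕ) - ((m : ℤ) + 2) / 2 by omega,
    show ((e + 1 : ℕ) : ℤ) - ((m + 1) / 2 : ℕ) = (e + 1 : ℕ) - ((m : ℤ) + 1) / 2 by omega,
    add_comm, ← mul_add]
  simp

/-- If `x₀, x₁ ∈ {0,1}^d` differ in exactly `m` coordinates and `b` is uniform
on `{0,1}^d`, then the probability that both `x₀` and `x₁` agree with `b` in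
exactly `d₀−1` or `d₀` coordinates is
`2^{−d} C(m,⌊m/2⌋) [C(d−m, d₀−⌈m/2⌉) + C(d−m, d₀−⌈(m+1)/2⌉)]`. -/
theorem pair_bucket_probability (d d₀ m : ℕ) (hd₀ : 0 < d₀) (hd : d₀ ≤ d)
    (x₀ x₁ : Fin d → Bool)
    (hm : (Finset.univ.filter fun i => x₀ i ≠ x₁ i).card = m) :
    (PMF.uniformOfFintype (Fin d → Bool)).toMeasure
        {b | ((Finset.univ.filter fun i => x₀ i = b i).card = d₀ - 1 ∨
              (Finset.univ.filter fun i => x₀ i = b i).card = d₀) ∧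
             ((Finset.univ.filter fun i => x₁ i = b i).card = d₀ - 1 ∨
              (Finset.univ.filter fun i => x₁ i = b i).card = d₀)} =
      ((m.choose (m / 2) *
          (chooseInt (d - m) ((d₀ : ℤ) - (m + 1) / 2) +
           chooseInt (d - m) ((d₀ : ℤ) - (m + 2) / 2)) : ℕ) : ENNReal) / 2 ^ d :=
  pair_bucket_probability_general d d₀ m hd₀ x₀ x₁ hm
end
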